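/- arXiv:math/0509024 — 12 statements merged into one kernel-verified Lean document; each statement's English description precedes it below -/
import Mathlib

section
/- Let $A$, $B$, $C$ be finite nonempty subsets of a (not necessarily abelian) group $G$. Then $|A C^{-1}| \cdot |B| \le |A B^{-1}| \cdot |B C^{-1}|$. -/
open Finset Pointwise

theorem stmt0 {G : Type*} [Group G] [DecidableEq G]
    (A B C : Finset G) (hA : A.Nonempty) (hB : B.Nonempty) (hC : C.Nonempty) :
    (A * C⁻¹).card * B.card ≤ (A * B⁻¹).card * (B * C⁻¹).card := by
  have : (B * C⁻¹).card = (C * B⁻¹).card := by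
    rw [← Finset.card_inv]; simp [mul_inv_rev]
  rw [this]
  simpa [div_eq_mul_inv] using Finset.ruzsa_triangle_inequality_div_div_div A B C
end

section
/- Let $A$ be a finite nonempty subset of a group $G$. Then $d(A,A) \le 2\, d(A, A^{-1})$, where $d$ denotes the Ruzsa distance $d(X,Y) = \log(|XY^{-1}|/\sqrt{|X||Y|})$. -/
open Finset Pointwise

/-- The Ruzsa distance between two finite subsets of a group. -/
noncomputable def ruzsaDist {G : Type*} [Group G] [DecidableEq G] (X Y : Finset G) : ℝ :=
  Real.log ((X * Y⁻¹).card / Real.sqrt (X.card * Y.card))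

theorem stmt2 {G : Type*} [Group G] [DecidableEq G]
    (A : Finset G) (hA : A.Nonempty) :
    ruzsaDist A A ≤ 2 * ruzsaDist A A⁻¹ := by
  have key := Finset.ruzsa_triangle_inequality_mulInv_mul_mul A A A
  have ha0 : (0:ℝ) < (A.card : ℝ) := by exact_mod_cast hA.card_pos
  have hx0 : (0:ℝ) < ((A * A⁻¹).card : ℝ) := by
    exact_mod_cast (hA.mul hA.inv).card_pos
  have hay : (A.card : ℝ) ≤ ((A * A).card : ℝ) := by
    exact_mod_cast Finset.card_le_card_mul_left hA
  have hkey : ((A * A⁻¹).card : ℝ) * (A.card : ℝ) ≤ ((A * A).card : ℝ) ^ 2 := by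
    rw [sq]; exact_mod_cast key
  have hsq : Real.sqrt ((A.card : ℝ) * (A.card : ℝ)) = (A.card : ℝ) :=
    Real.sqrt_mul_self ha0.le
  have hsq2 : Real.sqrt ((A.card : ℝ) * ((A⁻¹).card : ℝ)) = (A.card : ℝ) := by
    rw [Finset.card_inv]; exact hsq
  unfold ruzsaDist
  rw [inv_inv, hsq, hsq2, show (2:ℝ) = ((2:ℕ):ℝ) by norm_num, ← Real.log_pow]
  apply Real.log_le_log (by positivity)
  rw [div_pow, div_le_div_iff₀ ha0 (by positivity)]
  nlinarith [ha0.le, hay, hkey]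
end

section
/- Let $A$ be a finite nonempty subset of a group $G$, and for $r \ge 1$ let $A_r = \{g_1 g_2 \cdots g_r : g_i \in A \cup A^{-1} \cup \{1\}\}$. Then for every integer $n \ge 3$, $|A_n|/|A| \le (|A_3|/|A|)^{n-2}$. -/
open Finset Pointwise

private lemma symm_aux {G : Type*} [Group G] [DecidableEq G] (A : Finset G) :
    (A ∪ A⁻¹ ∪ {1})⁻¹ = A ∪ A⁻¹ ∪ {1} := by
  ext x
  simp only [Finset.mem_inv', Finset.mem_union, Finset.mem_singleton, Finset.inv_mem_inv,
    inv_eq_one]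
  constructor <;> rintro ((h | h) | h) <;> simp_all [Finset.mem_inv']

private lemma key_aux {G : Type*} [Group G] [DecidableEq G] (B : Finset G)
    (hB : B⁻¹ = B) (k : ℕ) :
    ((B ^ (k + 3)).card : ℝ) * (B.card : ℝ) ^ k ≤ ((B ^ 3).card : ℝ) ^ (k + 1) := by
  induction k with
  | zero => simp
  | succ k ih =>
    have hstep : ((B ^ (k + 4)).card : ℕ) * B.card ≤ (B ^ (k + 3)).card * (B ^ 3).card := by
      have := Finset.ruzsa_triangle_inequality_mul_mulInv_mul (B ^ (k + 2)) B (B ^ 2)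
      rw [← inv_pow, hB] at this
      calc (B ^ (k + 4)).card * B.card = B.card * ((B ^ (k + 2)) * (B ^ 2)).card := by
            rw [← pow_add]; ring_nf
        _ ≤ (B * B ^ (k + 2)).card * (B * B ^ 2).card := this
        _ = (B ^ (k + 3)).card * (B ^ 3).card := by
            rw [← pow_succ', ← pow_succ']
    have hstep' : ((B ^ (k + 4)).card : ℝ) * B.card ≤ (B ^ (k + 3)).card * (B ^ 3).card := by
      exact_mod_cast hstep
    calc ((B ^ (k + 1 + 3)).card : ℝ) * (B.card : ℝ) ^ (k + 1)
        = (((B ^ (k + 4)).card : ℝ) * B.card) * (B.card : ℝ) ^ k := by ring_nf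
      _ ≤ (((B ^ (k + 3)).card : ℝ) * (B ^ 3).card) * (B.card : ℝ) ^ k := by
          apply mul_le_mul_of_nonneg_right hstep' (by positivity)
      _ = (((B ^ (k + 3)).card : ℝ) * (B.card : ℝ) ^ k) * (B ^ 3).card := by ring
      _ ≤ ((B ^ 3).card : ℝ) ^ (k + 1) * (B ^ 3).card := by
          apply mul_le_mul_of_nonneg_right ih (by positivity)
      _ = ((B ^ 3).card : ℝ) ^ (k + 1 + 1) := by ring

theorem stmt3 {G : Type*} [Group G] [DecidableEq G]
    (A : Finset G) (hA : A.Nonempty) (n : ℕ) (hn : 3 ≤ n) :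
    (((A ∪ A⁻¹ ∪ {1}) ^ n).card : ℝ) / A.card
      ≤ ((((A ∪ A⁻¹ ∪ {1}) ^ 3).card : ℝ) / A.card) ^ (n - 2) := by
  obtain ⟨k, rfl⟩ := Nat.exists_eq_add_of_le hn
  set B : Finset G := A ∪ A⁻¹ ∪ {1} with hBdef
  have hAB : A ⊆ B := by
    intro x hx; simp [hBdef, Finset.mem_union, hx]
  have hcard : (A.card : ℝ) ≤ B.card := by
    exact_mod_cast Finset.card_le_card hAB
  have hApos : (0 : ℝ) < A.card := by exact_mod_cast hA.card_pos
  have hkey := key_aux B (symm_aux A) k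
  have h32 : 3 + k - 2 = k + 1 := by omega
  rw [h32, div_pow]
  rw [div_le_div_iff₀ hApos (by positivity)]
  have hpk : ((A.card : ℝ)) ^ (k + 1) = (A.card : ℝ) ^ k * A.card := by ring
  calc ((B ^ (3 + k)).card : ℝ) * (A.card : ℝ) ^ (k + 1)
      = (((B ^ (k + 3)).card : ℝ) * (A.card : ℝ) ^ k) * A.card := by
        rw [add_comm 3 k]; ring
    _ ≤ (((B ^ (k + 3)).card : ℝ) * (B.card : ℝ) ^ k) * A.card := by
        have : ((A.card : ℝ)) ^ k ≤ (B.card : ℝ) ^ k :=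
          pow_le_pow_left₀ (by positivity) hcard k
        apply mul_le_mul_of_nonneg_right _ hApos.le
        apply mul_le_mul_of_nonneg_left this (by positivity)
    _ ≤ ((B ^ 3).card : ℝ) ^ (k + 1) * A.card := by
        apply mul_le_mul_of_nonneg_right hkey hApos.le
end

section
/- Let $A$ be a finite nonempty subset of a group $G$. Then $|A A A^{-1}| \cdot |A| \le |AAA|^2$ and $|A A^{-1} A| \cdot |A| \le |A A A^{-1}| \cdot |AAA|$. -/
open Finset Pointwise

theorem stmt4 {G : Type*} [Group G] [DecidableEq G]
    (A : Finset G) (hA : A.Nonempty) :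
    (A * A * A⁻¹).card * A.card ≤ (A * A * A).card ^ 2 ∧
    (A * A⁻¹ * A).card * A.card ≤ (A * A * A⁻¹).card * (A * A * A).card := by
  have h2 : (A * A).card ≤ (A * A * A).card := card_le_card_mul_right hA
  constructor
  · calc (A * A * A⁻¹).card * A.card ≤ (A * A * A).card * (A * A).card :=
          Finset.ruzsa_triangle_inequality_mulInv_mul_mul (A * A) A A
      _ ≤ (A * A * A).card * (A * A * A).card := Nat.mul_le_mul_left _ h2
      _ = (A * A * A).card ^ 2 := (sq _).symm
  · have key := Finset.ruzsa_triangle_inequality_invMul_mul_mul (A * A⁻¹) A A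
    rw [mul_inv_rev, inv_inv] at key
    calc (A * A⁻¹ * A).card * A.card
        = A.card * ((A * A⁻¹) * A).card := by rw [mul_comm]
      _ ≤ (A * (A * A⁻¹)).card * (A * A).card := key
      _ = (A * A * A⁻¹).card * (A * A).card := by rw [mul_assoc]
      _ ≤ (A * A * A⁻¹).card * (A * A * A).card := Nat.mul_le_mul_left _ h2
end

section
/- Let $G$ be a group and $A$ a nonempty finite subset of $G$. Let $\Lambda_A$ be the set of conjugacy classes of $G$ that intersect $A$. Then there exists $g \in A$ such that $|C_G(g) \cap (A^{-1}A)| \ge |\Lambda_A| \cdot |A| / |A \cdot A \cdot A^{-1}|$. -/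
open Finset Pointwise

theorem stmt6 {G : Type*} [Group G] [DecidableEq G] [DecidableEq (ConjClasses G)]
    (A : Finset G) (hA : A.Nonempty) :
    ∃ g ∈ A,
      (A.image (ConjClasses.mk (α := G))).card * A.card
        ≤ ((A⁻¹ * A).filter (fun x => x * g = g * x)).card * (A * A * A⁻¹).card := by
  classical
  set B := A.image (ConjClasses.mk (α := G)) with hB
  set N : G → ℕ := fun g => ((A⁻¹ * A).filter (fun x => x * g = g * x)).card with hN
  -- representative function
  have hex : ∀ c ∈ B, ∃ a, a ∈ A ∧ ConjClasses.mk a = c := by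
    intro c hc
    simpa using Finset.mem_image.mp hc
  set rep : ConjClasses G → G := fun c =>
    if h : ∃ a, a ∈ A ∧ ConjClasses.mk a = c then h.choose else 1 with hrep
  have hrepA : ∀ c ∈ B, rep c ∈ A := by
    intro c hc
    have h := hex c hc
    simp only [hrep, dif_pos h]
    exact h.choose_spec.1
  have hrepmk : ∀ c ∈ B, ConjClasses.mk (rep c) = c := by
    intro c hc
    have h := hex c hc
    simp only [hrep, dif_pos h]
    exact h.choose_spec.2
  obtain ⟨g, hgA, hgmax⟩ := A.exists_max_image N hA
  refine ⟨g, hgA, ?_⟩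
  set f : ConjClasses G × G → G := fun p => p.2 * rep p.1 * p.2⁻¹ with hf
  set s : Finset (ConjClasses G × G) := B ×ˢ A with hs
  have himg : s.image f ⊆ A * A * A⁻¹ := by
    intro y hy
    obtain ⟨p, hp, rfl⟩ := Finset.mem_image.mp hy
    obtain ⟨hp1, hp2⟩ := Finset.mem_product.mp hp
    exact Finset.mul_mem_mul (Finset.mul_mem_mul hp2 (hrepA _ hp1)) (Finset.inv_mem_inv hp2)
  have hfib : ∀ y ∈ s.image f, (s.filter (fun p => f p = y)).card ≤ N g := by
    intro y hy
    obtain ⟨p₀, hp₀, hfp₀⟩ := Finset.mem_image.mp hy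
    obtain ⟨c₀, a₀⟩ := p₀
    obtain ⟨hc₀, ha₀⟩ := Finset.mem_product.mp hp₀
    -- every element of the fiber has first coordinate c₀
    have hcls : ∀ p ∈ s.filter (fun p => f p = y), p.1 = c₀ := by
      intro p hp
      obtain ⟨hps, hpy⟩ := Finset.mem_filter.mp hp
      obtain ⟨hp1, hp2⟩ := Finset.mem_product.mp hps
      have h1 : ConjClasses.mk (f p) = p.1 := by
        have base : ConjClasses.mk (p.2 * rep p.1 * p.2⁻¹) = ConjClasses.mk (rep p.1) :=
          (ConjClasses.mk_eq_mk_iff_isConj.mpr (isConj_iff.mpr ⟨p.2, rfl⟩)).symm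
        simpa [hf, hrepmk p.1 hp1] using base
      have h2 : ConjClasses.mk (f (c₀, a₀)) = c₀ := by
        have base : ConjClasses.mk (a₀ * rep c₀ * a₀⁻¹) = ConjClasses.mk (rep c₀) :=
          (ConjClasses.mk_eq_mk_iff_isConj.mpr (isConj_iff.mpr ⟨a₀, rfl⟩)).symm
        simpa [hf, hrepmk c₀ hc₀] using base
      rw [← h1, hpy, ← hfp₀, h2]
    have hle : (s.filter (fun p => f p = y)).card ≤ N (rep c₀) := by
      apply Finset.card_le_card_of_injOn (fun p => a₀⁻¹ * p.2)
      · intro p hp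
        have hpc := hcls p hp
        obtain ⟨hps, hpy⟩ := Finset.mem_filter.mp hp
        obtain ⟨hp1, hp2⟩ := Finset.mem_product.mp hps
        refine Finset.mem_filter.mpr ⟨Finset.mul_mem_mul (Finset.inv_mem_inv ha₀) hp2, ?_⟩
        have heq : p.2 * rep c₀ * p.2⁻¹ = a₀ * rep c₀ * a₀⁻¹ := by
          have : f p = f (c₀, a₀) := by rw [hpy, hfp₀]
          simpa [hf, hpc] using this
        calc a₀⁻¹ * p.2 * rep c₀ = a₀⁻¹ * (p.2 * rep c₀ * p.2⁻¹) * p.2 := by group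
          _ = a₀⁻¹ * (a₀ * rep c₀ * a₀⁻¹) * p.2 := by rw [heq]
          _ = rep c₀ * (a₀⁻¹ * p.2) := by group
      · intro p hp q hq hpq
        have h2 : p.2 = q.2 := by
          have := mul_left_cancel hpq
          exact this
        have h1 : p.1 = q.1 := by rw [hcls p hp, hcls q hq]
        exact Prod.ext h1 h2
    exact hle.trans (hgmax _ (hrepA c₀ hc₀))
  have key := Finset.card_le_mul_card_image (f := f) s (N g) hfib
  have hcard : s.card = B.card * A.card := Finset.card_product _ _
  calc B.card * A.card = s.card := hcard.symm
    _ ≤ N g * (s.image f).card := key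
    _ ≤ N g * (A * A * A⁻¹).card :=
        Nat.mul_le_mul_left _ (Finset.card_le_card himg)
end

section
/- Let $K$ be a field and let $V \subseteq \mathrm{SL}_2(K)$ be a finite set of diagonal matrices. Let $g = \begin{pmatrix} a & b \\ c & d \end{pmatrix} \in \mathrm{SL}_2(K)$ with $abcd \ne 0$. Then $|V g V g^{-1} V| \ge \frac{1}{2}(\frac{1}{4}|V| - 5)|V|^2$. -/
/-
Write `u = diag(t, t⁻¹)`, `v = diag(s, s⁻¹)`, `w = diag(r, r⁻¹)` and `X = g v g⁻¹`. Left and right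
multiplication by diagonal matrices rescale the entries of `X`, so `M = u X w` satisfies
`M₀₁ M₁₀ = X₀₁ X₁₀ = -abcd (s - s⁻¹)²`: given `M`, the entry `s` is a root of a nonzero quartic,
which leaves at most 4 choices of `v`. Once `v` is fixed with `s⁴ ≠ 1`, the entry `X₀₁` and one of
`X₀₀`, `X₁₁` are nonzero, so `M` determines `t r⁻¹` and `t r` (or `t⁻¹ r⁻¹`), hence `t²`; this
leaves at most 2 choices of `u`, and `w` is then forced. Discarding the at most 4 elements `v ∈ V` with
`s⁴ = 1`, every element of `V g V g⁻¹ V` arises from at most 8 triples, so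
`|V|² (|V| - 4) ≤ 8 |V g V g⁻¹ V|`.
-/

open Finset Pointwise Matrix MatrixGroups Polynomial

theorem Matrix.isDiag_of_fin_two {α : Type*} [Zero α] {A : Matrix (Fin 2) (Fin 2) α}
    (h01 : A 0 1 = 0) (h10 : A 1 0 = 0) : A.IsDiag := by
  intro i j hij
  fin_cases i <;> fin_cases j <;> simp_all

theorem Matrix.IsDiag.mul_mul_apply {n α : Type*} [DecidableEq n] [Fintype n] [Semiring α]
    {D E : Matrix n n α} (hD : D.IsDiag) (hE : E.IsDiag) (A : Matrix n n α) (i j : n) :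
    (D * A * E) i j = D i i * A i j * E j j := by
  conv_lhs => rw [← hD.diagonal_diag, ← hE.diagonal_diag]
  simp [diagonal_mul, mul_diagonal]

namespace Matrix.SpecialLinearGroup

section CommRing

variable {R : Type*} [CommRing R]

theorem apply_zero_zero_mul_apply_one_one_of_isDiag {v : SL(2, R)} (hv : IsDiag ⇑v) :
    v 0 0 * v 1 1 = 1 := by
  have h := v.det_coe
  rwa [det_fin_two, hv (i := 0) (j := 1) (by decide), hv (i := 1) (j := 0) (by decide),
    mul_zero, sub_zero] at h

theorem eq_of_isDiag_of_apply_zero_zero_eq {v w : SL(2, R)} (hv : IsDiag ⇑v) (hw : IsDiag ⇑w)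
    (h : v 0 0 = w 0 0) : v = w := by
  have hv' := apply_zero_zero_mul_apply_one_one_of_isDiag hv
  have hw' := apply_zero_zero_mul_apply_one_one_of_isDiag hw
  have h11 : v 1 1 = w 1 1 := by linear_combination w 1 1 * hv' - v 1 1 * hw' - v 1 1 * w 1 1 * h
  ext i j
  fin_cases i <;> fin_cases j
  · exact h
  · simp [hv (i := 0) (j := 1) (by decide), hw (i := 0) (j := 1) (by decide)]
  · simp [hv (i := 1) (j := 0) (by decide), hw (i := 1) (j := 0) (by decide)]
  · exact h11

theorem mul_mul_apply_zero_one_mul_apply_one_zero {u w : SL(2, R)} (hu : IsDiag ⇑u)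
    (hw : IsDiag ⇑w) (A : Matrix (Fin 2) (Fin 2) R) :
    ((u : Matrix (Fin 2) (Fin 2) R) * A * w) 0 1 * ((u : Matrix (Fin 2) (Fin 2) R) * A * w) 1 0 =
      A 0 1 * A 1 0 := by
  rw [hu.mul_mul_apply hw, hu.mul_mul_apply hw]
  linear_combination
    (A 0 1 * A 1 0 * u 0 0 * u 1 1) * apply_zero_zero_mul_apply_one_one_of_isDiag hw
      + (A 0 1 * A 1 0) * apply_zero_zero_mul_apply_one_one_of_isDiag hu

theorem coe_mul_mul_inv_of_isDiag (g : SL(2, R)) {v : SL(2, R)} (hv : IsDiag ⇑v) :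
    ((g * v * g⁻¹ : SL(2, R)) : Matrix (Fin 2) (Fin 2) R) =
      !![g 0 0 * g 1 1 * v 0 0 - g 0 1 * g 1 0 * v 1 1, g 0 0 * g 0 1 * (v 1 1 - v 0 0);
        g 1 0 * g 1 1 * (v 0 0 - v 1 1), g 0 0 * g 1 1 * v 1 1 - g 0 1 * g 1 0 * v 0 0] := by
  have h01 : v 0 1 = 0 := hv (by decide)
  have h10 : v 1 0 = 0 := hv (by decide)
  ext i j
  fin_cases i <;> fin_cases j <;>
    simp [coe_inv, adjugate_fin_two, mul_apply, Fin.sum_univ_two, h01, h10] <;> ring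

end CommRing

section Field

variable {K : Type*} [Field K]

theorem sq_apply_zero_zero_eq_of_mul_mul_eq {A : Matrix (Fin 2) (Fin 2) K} (hA01 : A 0 1 ≠ 0)
    (hA : A 0 0 ≠ 0 ∨ A 1 1 ≠ 0) {u w u' w' : SL(2, K)} (hu : IsDiag ⇑u) (hw : IsDiag ⇑w)
    (hu' : IsDiag ⇑u') (hw' : IsDiag ⇑w')
    (h : (u : Matrix (Fin 2) (Fin 2) K) * A * w = (u' : Matrix (Fin 2) (Fin 2) K) * A * w') :
    u 0 0 ^ 2 = u' 0 0 ^ 2 := by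
  have entry (i j : Fin 2) (hij : A i j ≠ 0) : u i i * w j j = u' i i * w' j j := by
    have := congrFun (congrFun h i) j
    rw [hu.mul_mul_apply hw, hu'.mul_mul_apply hw'] at this
    exact mul_right_cancel₀ hij (by linear_combination this)
  have hu1 := apply_zero_zero_mul_apply_one_one_of_isDiag hu
  have hw1 := apply_zero_zero_mul_apply_one_one_of_isDiag hw
  have hu'1 := apply_zero_zero_mul_apply_one_one_of_isDiag hu'
  have hw'1 := apply_zero_zero_mul_apply_one_one_of_isDiag hw'
  have e01 := entry 0 1 hA01
  rcases hA with hA00 | hA11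
  · -- `u₀₀² = (u₀₀ w₀₀) (u₀₀ w₁₁)` because `w₀₀ w₁₁ = 1`
    have e00 := entry 0 0 hA00
    linear_combination (u 0 0 * w 1 1) * e00 + (u' 0 0 * w' 0 0) * e01 - u 0 0 ^ 2 * hw1
      + u' 0 0 ^ 2 * hw'1
  · -- `u₀₀² (u₁₁ w₁₁) = u₀₀ w₁₁` because `u₀₀ u₁₁ = 1`
    have e11 := entry 1 1 hA11
    have hne : u 1 1 * w 1 1 ≠ 0 := mul_ne_zero (right_ne_zero_of_mul_eq_one hu1)
      (right_ne_zero_of_mul_eq_one hw1)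
    refine mul_right_cancel₀ hne ?_
    linear_combination (u 0 0 * w 1 1) * hu1 + e01 - u' 0 0 * w' 1 1 * hu'1 - u' 0 0 ^ 2 * e11

theorem card_le_two_of_mul_mul_eq {X : SL(2, K)} (hX01 : X 0 1 ≠ 0) (hX : X 0 0 ≠ 0 ∨ X 1 1 ≠ 0)
    {M : SL(2, K)} {F : Finset (SL(2, K) × SL(2, K))}
    (hF : ∀ q ∈ F, IsDiag ⇑q.1 ∧ IsDiag ⇑q.2 ∧ q.1 * X * q.2 = M) : #F ≤ 2 := by
  classical
  rcases F.eq_empty_or_nonempty with rfl | ⟨q₀, hq₀⟩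
  · simp
  obtain ⟨hu₀, hw₀, hM₀⟩ := hF q₀ hq₀
  calc #F ≤ #{q₀.1 0 0, -q₀.1 0 0} := by
        refine card_le_card_of_injOn (fun q => q.1 0 0) (fun q hq => ?_) (fun q hq q' hq' h => ?_)
        · obtain ⟨hu, hw, hM⟩ := hF q hq
          have := sq_apply_zero_zero_eq_of_mul_mul_eq hX01 hX hu hw hu₀ hw₀
            (by rw [← coe_mul, ← coe_mul, ← coe_mul, ← coe_mul, hM, hM₀])
          rcases sq_eq_sq_iff_eq_or_eq_neg.mp this with h | h <;> simp [h]
        · obtain ⟨hu, -, hM⟩ := hF q hq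
          obtain ⟨hu', -, hM'⟩ := hF q' hq'
          have h1 : q.1 = q'.1 := eq_of_isDiag_of_apply_zero_zero_eq hu hu' h
          have h2 : q.2 = q'.2 := mul_left_cancel (hM.trans (h1 ▸ hM'.symm))
          exact Prod.ext h1 h2
    _ ≤ 2 := card_le_two

theorem card_le_natDegree_of_isRoot {P : K[X]} (hP : P ≠ 0) {V : Finset SL(2, K)}
    (hV : ∀ v ∈ V, IsDiag ⇑v ∧ P.IsRoot (v 0 0)) : #V ≤ P.natDegree := by
  classical
  have hinj : Set.InjOn (fun v : SL(2, K) => v 0 0) V := fun v hv w hw h =>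
    eq_of_isDiag_of_apply_zero_zero_eq (hV v hv).1 (hV w hw).1 h
  rw [← card_image_of_injOn hinj]
  refine Polynomial.card_le_degree_of_subset_roots fun x hx => ?_
  obtain ⟨v, hv, rfl⟩ := mem_image.mp hx
  exact (mem_roots hP).mpr (hV v hv).2

theorem mul_mul_inv_apply_zero_one_ne_zero {g v : SL(2, K)} (hg : g 0 0 * g 0 1 ≠ 0)
    (hv : IsDiag ⇑v) (hs : v 0 0 ≠ v 1 1) : (g * v * g⁻¹) 0 1 ≠ 0 := by
  rw [coe_mul_mul_inv_of_isDiag g hv]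
  simpa using mul_ne_zero hg (sub_ne_zero_of_ne hs.symm)

theorem mul_mul_inv_apply_zero_zero_ne_zero_or_apply_one_one_ne_zero {g v : SL(2, K)}
    (hg : g 0 0 * g 1 1 ≠ 0) (hv : IsDiag ⇑v) (hs : v 0 0 ^ 4 ≠ 1) :
    (g * v * g⁻¹) 0 0 ≠ 0 ∨ (g * v * g⁻¹) 1 1 ≠ 0 := by
  rw [coe_mul_mul_inv_of_isDiag g hv]
  by_contra! h
  simp only [of_apply, cons_val', cons_val_zero, cons_val_one, empty_val', cons_val_fin_one] at h
  apply hs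
  have key : g 0 0 * g 1 1 * (v 0 0 ^ 4 - 1) = 0 := by
    linear_combination v 0 0 ^ 3 * h.1 - v 0 0 * h.2
      + (g 0 1 * g 1 0 * v 0 0 ^ 2 + g 0 0 * g 1 1) * apply_zero_zero_mul_apply_one_one_of_isDiag hv
  exact sub_eq_zero.mp ((mul_eq_zero.mp key).resolve_left hg)

/-- If `M = u (g v g⁻¹) w` with `u, v, w` diagonal, then `v 0 0` is a root of this polynomial:
`M 0 1 * M 1 0` is invariant under the two-sided action of the diagonal torus and equals
`-g₀₀ g₀₁ g₁₀ g₁₁ (v₀₀ - v₀₀⁻¹)²` for `M = g v g⁻¹`. -/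
noncomputable def torusDoubleCosetPoly (g M : SL(2, K)) : K[X] :=
  C (g 0 0 * g 0 1 * g 1 0 * g 1 1) * (X ^ 2 - 1) ^ 2 + C (M 0 1 * M 1 0) * X ^ 2

theorem torusDoubleCosetPoly_ne_zero {g : SL(2, K)} (hg : g 0 0 * g 0 1 * g 1 0 * g 1 1 ≠ 0)
    (M : SL(2, K)) : torusDoubleCosetPoly g M ≠ 0 := fun h => hg <| by
  simpa [torusDoubleCosetPoly] using congrArg (eval 0) h

theorem natDegree_torusDoubleCosetPoly_le (g M : SL(2, K)) :
    (torusDoubleCosetPoly g M).natDegree ≤ 4 := by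
  unfold torusDoubleCosetPoly
  compute_degree

theorem isRoot_torusDoubleCosetPoly {g u v w M : SL(2, K)} (hu : IsDiag ⇑u) (hv : IsDiag ⇑v)
    (hw : IsDiag ⇑w) (hM : u * (g * v * g⁻¹) * w = M) :
    (torusDoubleCosetPoly g M).IsRoot (v 0 0) := by
  have hinv := mul_mul_apply_zero_one_mul_apply_one_zero hu hw (g * v * g⁻¹ : SL(2, K))
  rw [← coe_mul, ← coe_mul, hM, coe_mul_mul_inv_of_isDiag g hv] at hinv
  simp only [of_apply, cons_val', cons_val_zero, cons_val_one, empty_val', cons_val_fin_one] at hinv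
  simp only [torusDoubleCosetPoly, IsRoot, eval_add, eval_mul, eval_pow, eval_sub, eval_C, eval_X,
    eval_one]
  linear_combination v 0 0 ^ 2 * hinv
    + g 0 0 * g 0 1 * g 1 0 * g 1 1 * (2 * v 0 0 ^ 2 - v 0 0 * v 1 1 - 1)
      * apply_zero_zero_mul_apply_one_one_of_isDiag hv

theorem card_le_eight_of_mul_mul_inv_mul_eq {g : SL(2, K)}
    (hg : g 0 0 * g 0 1 * g 1 0 * g 1 1 ≠ 0) {M : SL(2, K)}
    {F : Finset (SL(2, K) × SL(2, K) × SL(2, K))}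
    (hF : ∀ p ∈ F, IsDiag ⇑p.1 ∧ IsDiag ⇑p.2.1 ∧ p.2.1 0 0 ^ 4 ≠ 1 ∧ IsDiag ⇑p.2.2 ∧
      p.1 * (g * p.2.1 * g⁻¹) * p.2.2 = M) : #F ≤ 8 := by
  classical
  have hab : g 0 0 * g 0 1 ≠ 0 := fun h => hg (by rw [h]; ring)
  have had : g 0 0 * g 1 1 ≠ 0 := fun h => hg (by linear_combination g 0 1 * g 1 0 * h)
  have middle_le_two : ∀ v ∈ F.image (·.2.1), #{p ∈ F | p.2.1 = v} ≤ 2 := by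
    intro v hv
    obtain ⟨p, hp, rfl⟩ := mem_image.mp hv
    obtain ⟨-, hv, hs, -⟩ := hF p hp
    have hss : p.2.1 0 0 ≠ p.2.1 1 1 := fun h => hs <| by
      have := apply_zero_zero_mul_apply_one_one_of_isDiag hv
      rw [← h] at this
      linear_combination (p.2.1 0 0 ^ 2 + 1) * this
    have hinj : Set.InjOn (fun q : SL(2, K) × SL(2, K) × SL(2, K) => (q.1, q.2.2))
        ↑({q ∈ F | q.2.1 = p.2.1} : Finset _) :=
      fun q hq q' hq' h => by
        rw [mem_coe, mem_filter] at hq hq'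
        rw [Prod.mk.injEq] at h
        exact Prod.ext h.1 (Prod.ext (hq.2.trans hq'.2.symm) h.2)
    rw [← card_image_of_injOn hinj]
    refine card_le_two_of_mul_mul_eq (M := M) (mul_mul_inv_apply_zero_one_ne_zero hab hv hss)
      (mul_mul_inv_apply_zero_zero_ne_zero_or_apply_one_one_ne_zero had hv hs) fun q hq => ?_
    obtain ⟨r, hr, rfl⟩ := mem_image.mp hq
    obtain ⟨hrF, hrv⟩ := mem_filter.mp hr
    obtain ⟨hu, -, -, hw, hM⟩ := hF r hrF
    exact ⟨hu, hw, hrv ▸ hM⟩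
  have image_le_four : #(F.image (·.2.1)) ≤ 4 := by
    refine (card_le_natDegree_of_isRoot (torusDoubleCosetPoly_ne_zero hg M) fun v hv => ?_).trans
      (natDegree_torusDoubleCosetPoly_le g M)
    obtain ⟨p, hp, rfl⟩ := mem_image.mp hv
    obtain ⟨hu, hv, -, hw, hM⟩ := hF p hp
    exact ⟨hv, isRoot_torusDoubleCosetPoly hu hv hw hM⟩
  calc #F ≤ 2 * #(F.image (·.2.1)) := card_le_mul_card_image F 2 middle_le_two
    _ ≤ 8 := by omega

theorem card_mul_card_mul_card_le_card_mul_image_mul [DecidableEq SL(2, K)] {g : SL(2, K)}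
    (hg : g 0 0 * g 0 1 * g 1 0 * g 1 1 ≠ 0) {U V W : Finset SL(2, K)} (hU : ∀ u ∈ U, IsDiag ⇑u)
    (hV : ∀ v ∈ V, IsDiag ⇑v ∧ v 0 0 ^ 4 ≠ 1) (hW : ∀ w ∈ W, IsDiag ⇑w) :
    #U * (#V * #W) ≤ 8 * #(U * V.image (fun v => g * v * g⁻¹) * W) := by
  rw [← card_product, ← card_product]
  refine card_le_mul_card_image_of_maps_to (f := fun p => p.1 * (g * p.2.1 * g⁻¹) * p.2.2)
    (fun p hp => ?_) 8 fun M _ => card_le_eight_of_mul_mul_inv_mul_eq (M := M) hg fun p hp => ?_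
  · rw [mem_product, mem_product] at hp
    exact mul_mem_mul (mul_mem_mul hp.1 (mem_image_of_mem _ hp.2.1)) hp.2.2
  · rw [mem_filter, mem_product, mem_product] at hp
    obtain ⟨⟨hu, hv, hw⟩, hM⟩ := hp
    exact ⟨hU _ hu, (hV _ hv).1, (hV _ hv).2, hW _ hw, hM⟩

end Field

end Matrix.SpecialLinearGroup

open Matrix.SpecialLinearGroup in
theorem stmt8 {K : Type*} [Field K]
    [DecidableEq (Matrix.SpecialLinearGroup (Fin 2) K)]
    (V : Finset (Matrix.SpecialLinearGroup (Fin 2) K))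
    (hdiag : ∀ v ∈ V, (v : Matrix (Fin 2) (Fin 2) K) 0 1 = 0 ∧
                      (v : Matrix (Fin 2) (Fin 2) K) 1 0 = 0)
    (g : Matrix.SpecialLinearGroup (Fin 2) K)
    (hg : (g : Matrix (Fin 2) (Fin 2) K) 0 0 * (g : Matrix (Fin 2) (Fin 2) K) 0 1 *
          (g : Matrix (Fin 2) (Fin 2) K) 1 0 * (g : Matrix (Fin 2) (Fin 2) K) 1 1 ≠ 0) :
    ((V * V.image (fun v => g * v * g⁻¹) * V).card : ℝ)
      ≥ 1 / 2 * ((V.card : ℝ) / 4 - 5) * (V.card : ℝ) ^ 2 := by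
  classical
  have hV v (hv : v ∈ V) : IsDiag ⇑v := isDiag_of_fin_two (hdiag v hv).1 (hdiag v hv).2
  set W := {v ∈ V | ¬v 0 0 ^ 4 = 1}
  have hW : #V ≤ #W + 4 := by
    have hbad : #{v ∈ V | v 0 0 ^ 4 = 1} ≤ 4 := by
      refine (card_le_natDegree_of_isRoot (X_pow_sub_C_ne_zero (by norm_num) (1 : K))
        fun v hv => ?_).trans natDegree_X_pow_sub_C.le
      obtain ⟨hvV, hv1⟩ := mem_filter.mp hv
      exact ⟨hV v hvV, by simp [hv1]⟩
    calc #V = #{v ∈ V | v 0 0 ^ 4 = 1} + #W := (card_filter_add_card_filter_not _).symm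
      _ ≤ #W + 4 := by omega
  have hcount : #V * (#W * #V) ≤ 8 * #(V * V.image (fun v => g * v * g⁻¹) * V) :=
    (card_mul_card_mul_card_le_card_mul_image_mul hg hV
      (fun v hv => ⟨hV v (mem_filter.mp hv).1, (mem_filter.mp hv).2⟩) hV).trans
      (by gcongr; exact filter_subset _ _)
  have hcount' : (#V : ℝ) * (#W * #V) ≤ 8 * #(V * V.image (fun v => g * v * g⁻¹) * V) := by
    exact_mod_cast hcount
  have hW' : (#V : ℝ) ≤ #W + 4 := by exact_mod_cast hW
  nlinarith [sq_nonneg (#V : ℝ)]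
end

section
/- Let $K$ be a field and $A$ a finite subset of $\mathrm{SL}_2(K)$ such that, writing matrices with respect to a fixed basis, every $g \in A$ satisfies $g_{12} g_{21} \ne 0$. Then $|\mathrm{Tr}(A A^{-1})| \ge |A| / (2 \cdot |\{(g_{11}, g_{22}) : g \in A\}|)$. -/
open Finset Pointwise Matrix

open scoped MatrixGroups

/-!
Split `A` into fibres according to the diagonal `(g₀₀, g₁₁)`; some fibre `F`, with diagonal
`(a, d)` say, has at least `|A| / |D|` elements, `D` being the set of diagonals. Fix `g ∈ F`.
For `h ∈ F` one has `tr (g h⁻¹) = g₀₀ d + g₁₁ a - g₀₁ h₁₀ - g₁₀ h₀₁` and `h₀₁ h₁₀ = a d - 1`, so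
for a prescribed trace `t` the entry `x = h₀₁` is a root of the nonzero quadratic
`g₁₀ x² + (t - g₀₀ d - g₁₁ a) x + g₀₁ (a d - 1)`. Since `h ∈ F` is determined by `h₀₁`, the map
`h ↦ tr (g h⁻¹)` is at most two-to-one on `F`, whence `|F| ≤ 2 |Tr(A A⁻¹)|`.
-/

open Polynomial in
theorem Finset.card_le_two_of_forall_quadratic_eq_zero {R : Type*} [CommRing R] [IsDomain R]
    {s : Finset R} {a b c : R} (ha : a ≠ 0)
    (hs : ∀ x ∈ s, a * x ^ 2 + b * x + c = 0) : #s ≤ 2 := by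
  calc #s ≤ (C a * X ^ 2 + C b * X + C c).natDegree := by
        refine card_le_degree_of_subset_roots fun x hx => ?_
        have hP : C a * X ^ 2 + C b * X + C c ≠ 0 := fun h => ha <| by
          simpa [h] using (leadingCoeff_quadratic (b := b) (c := c) ha).symm
        simpa [mem_roots hP] using hs x hx
    _ = 2 := natDegree_quadratic ha

namespace Matrix.SpecialLinearGroup

variable {R : Type*} [CommRing R]

theorem trace_mul_inv_fin_two (g h : SL(2, R)) :
    trace (↑(g * h⁻¹) : Matrix (Fin 2) (Fin 2) R) =
      g 0 0 * h 1 1 + g 1 1 * h 0 0 - g 0 1 * h 1 0 - g 1 0 * h 0 1 := by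
  simp only [coe_mul, coe_inv, adjugate_fin_two, trace_fin_two, mul_apply, of_apply, cons_val',
    cons_val_zero, cons_val_fin_one, Fin.sum_univ_two, cons_val_one]
  ring

theorem det_fin_two_eq (g : SL(2, R)) : g 0 0 * g 1 1 - g 0 1 * g 1 0 = 1 :=
  (det_fin_two _).symm.trans g.det_coe

theorem ext_of_diag_eq_of_apply_zero_one_eq [NoZeroDivisors R] {g h : SL(2, R)}
    (h00 : g 0 0 = h 0 0) (h11 : g 1 1 = h 1 1) (h01 : g 0 1 = h 0 1) (hg01 : g 0 1 ≠ 0) :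
    g = h := by
  have h10 : g 1 0 = h 1 0 := mul_left_cancel₀ hg01 <| by
    linear_combination g 1 1 * h00 + h 0 0 * h11 - h 1 0 * h01 - g.det_fin_two_eq + h.det_fin_two_eq
  ext i j
  fin_cases i <;> fin_cases j <;> assumption

variable [IsDomain R] [DecidableEq R]

theorem card_filter_trace_mul_inv_eq_le_two {F : Finset SL(2, R)} {a d : R}
    (hdiag : ∀ h ∈ F, h 0 0 = a ∧ h 1 1 = d) (h01 : ∀ h ∈ F, h 0 1 ≠ 0)
    {g : SL(2, R)} (hg : g 1 0 ≠ 0) (t : R) :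
    #{h ∈ F | trace (↑(g * h⁻¹) : Matrix (Fin 2) (Fin 2) R) = t} ≤ 2 := by
  set S := {h ∈ F | trace (↑(g * h⁻¹) : Matrix (Fin 2) (Fin 2) R) = t}
  have hinj : Set.InjOn (fun h : SL(2, R) => h 0 1) S := by
    intro h hh h' hh' he
    obtain ⟨hF, -⟩ := mem_filter.1 hh
    obtain ⟨hF', -⟩ := mem_filter.1 hh'
    exact ext_of_diag_eq_of_apply_zero_one_eq (((hdiag h hF).1).trans (hdiag h' hF').1.symm)
      (((hdiag h hF).2).trans (hdiag h' hF').2.symm) he (h01 h hF)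
  rw [← card_image_of_injOn hinj]
  refine card_le_two_of_forall_quadratic_eq_zero (b := t - g 0 0 * d - g 1 1 * a)
    (c := g 0 1 * (a * d - 1)) hg fun x hx => ?_
  obtain ⟨h, hh, rfl⟩ := mem_image.1 hx
  obtain ⟨hF, ht⟩ := mem_filter.1 hh
  obtain ⟨ha, hd⟩ := hdiag h hF
  have hdet := h.det_fin_two_eq
  rw [trace_mul_inv_fin_two, ha, hd] at ht
  rw [ha, hd] at hdet
  linear_combination -h 0 1 * ht + g 0 1 * hdet

theorem card_filter_diag_eq_le_two_mul_card_trace_mul_inv [DecidableEq SL(2, R)]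
    {A : Finset SL(2, R)} (hA : ∀ g ∈ A, g 0 1 * g 1 0 ≠ 0) (p : R × R) :
    #{g ∈ A | (g 0 0, g 1 1) = p} ≤
      2 * #((A * A⁻¹).image fun g : SL(2, R) => trace (g : Matrix (Fin 2) (Fin 2) R)) := by
  set F := {g ∈ A | (g 0 0, g 1 1) = p}
  obtain hF | ⟨g₀, hg₀⟩ := F.eq_empty_or_nonempty
  · simp [hF]
  obtain ⟨hg₀A, rfl⟩ := mem_filter.1 hg₀
  have hdiag : ∀ h ∈ F, h 0 0 = g₀ 0 0 ∧ h 1 1 = g₀ 1 1 := fun h hh =>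
    Prod.ext_iff.1 (mem_filter.1 hh).2
  calc #F ≤ 2 * #(F.image fun h => trace (↑(g₀ * h⁻¹) : Matrix (Fin 2) (Fin 2) R)) :=
        card_le_mul_card_image F 2 fun t _ => card_filter_trace_mul_inv_eq_le_two hdiag
          (fun h hh => left_ne_zero_of_mul (hA h (filter_subset _ _ hh)))
          (right_ne_zero_of_mul (hA g₀ hg₀A)) t
    _ ≤ 2 * #((A * A⁻¹).image fun g : SL(2, R) => trace (g : Matrix (Fin 2) (Fin 2) R)) := by
        refine Nat.mul_le_mul_left 2 (card_le_card (image_subset_iff.2 fun h hh => ?_))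
        exact mem_image_of_mem _ (mul_mem_mul hg₀A (inv_mem_inv (filter_subset _ _ hh)))

end Matrix.SpecialLinearGroup

theorem stmt9 {K : Type*} [Field K] [DecidableEq K]
    [DecidableEq (Matrix.SpecialLinearGroup (Fin 2) K)]
    (A : Finset (Matrix.SpecialLinearGroup (Fin 2) K))
    (hA : ∀ g ∈ A, (g : Matrix (Fin 2) (Fin 2) K) 0 1 * (g : Matrix (Fin 2) (Fin 2) K) 1 0 ≠ 0) :
    (((A * A⁻¹).image
        (fun g : Matrix.SpecialLinearGroup (Fin 2) K =>
          Matrix.trace (g : Matrix (Fin 2) (Fin 2) K))).card : ℝ)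
      ≥ (A.card : ℝ) /
          (2 * ((A.image (fun g : Matrix.SpecialLinearGroup (Fin 2) K =>
            ((g : Matrix (Fin 2) (Fin 2) K) 0 0, (g : Matrix (Fin 2) (Fin 2) K) 1 1))).card : ℝ)) := by
  set D := A.image fun g : SL(2, K) => (g 0 0, g 1 1)
  obtain hD | hD := D.eq_empty_or_nonempty
  · simp [hD]
  obtain ⟨p, -, hp⟩ := exists_le_card_fiber_of_nsmul_le_card_of_maps_to
    (fun g hg => mem_image_of_mem _ hg) hD (b := (#A : ℝ) / #D)
    (by rw [nsmul_eq_mul, mul_div_cancel₀ _ (by positivity)])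
  have hfiber := Nat.cast_le (α := ℝ) |>.2 <|
    SpecialLinearGroup.card_filter_diag_eq_le_two_mul_card_trace_mul_inv hA p
  push_cast at hfiber
  rw [ge_iff_le, mul_comm, ← div_div]
  linarith
end

section
/- For a prime $p$, a subset $A \subseteq \mathbb{F}_p$, and a subset $S \subseteq \mathbb{F}_p^*$, there exists $\xi \in S$ such that $|A + \xi A| \ge (1/p + p/(|S||A|^2))^{-1}$. -/
/-!
Write `n t = |∑_{a ∈ A} e(ta/p)|²`. Orthogonality of characters gives
`p · E(A, ξA) = ∑_t n(t) n(tξ)`. Summing over `ξ ∈ S`, the frequency `t = 0` contributes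
`|S| |A|⁴`, while for `t ≠ 0` the points `tξ` are distinct, so `∑_ξ n(tξ) ≤ ∑_u n(u) = p|A|` by
Parseval. Hence some `ξ ∈ S` has `E(A, ξA) ≤ |A|⁴/p + p|A|²/|S|`, and the Cauchy–Schwarz bound
`|A|⁴ ≤ |A + ξA| E(A, ξA)` concludes.
-/

open Finset Pointwise ZMod
open scoped Combinatorics.Additive

section ZMod

variable {N : ℕ} [NeZero N]

lemma sum_normSq_sum_stdAddChar_mul {α : Type*} [DecidableEq α] (X : Finset α)
    (f : α → ZMod N) :
    ∑ t, Complex.normSq (∑ x ∈ X, stdAddChar (t * f x))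
      = N * #{xy ∈ X ×ˢ X | f xy.1 = f xy.2} := by
  apply Complex.ofReal_injective
  push_cast
  simp_rw [← Complex.mul_conj, map_sum, ← AddChar.map_neg_eq_conj, sum_mul_sum,
    ← AddChar.map_add_eq_mul, ← sub_eq_add_neg, ← mul_sub, ← sum_product']
  rw [sum_product, sum_comm]
  simp_rw [AddChar.sum_mulShift _ (isPrimitive_stdAddChar N), sub_eq_zero, ZMod.card]
  rw [← Nat.cast_sum, sum_ite, sum_const_zero, add_zero, sum_const, smul_eq_mul]
  push_cast
  ring

noncomputable def expSum (B : Finset (ZMod N)) (t : ZMod N) : ℂ :=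
  ∑ a ∈ B, stdAddChar (t * a)

lemma sum_normSq_expSum (B : Finset (ZMod N)) :
    ∑ t, Complex.normSq (expSum B t) = N * #B := by
  rw [← diag_card, diag_eq_filter]
  exact sum_normSq_sum_stdAddChar_mul B id

lemma normSq_expSum_zero (B : Finset (ZMod N)) : Complex.normSq (expSum B 0) = #B ^ 2 := by
  simp [expSum, sq]

lemma expSum_mul_expSum (A B : Finset (ZMod N)) (t : ZMod N) :
    expSum A t * expSum B t = ∑ ab ∈ A ×ˢ B, stdAddChar (t * (ab.1 + ab.2)) := by
  simp_rw [expSum, sum_mul_sum, sum_product, mul_add, AddChar.map_add_eq_mul]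

lemma addEnergy_mul_eq_sum_normSq_mul (A B : Finset (ZMod N)) :
    N * E[A, B] = ∑ t, Complex.normSq (expSum A t) * Complex.normSq (expSum B t) := by
  simp_rw [← map_mul, expSum_mul_expSum, sum_normSq_sum_stdAddChar_mul, addEnergy_eq_card_filter]

lemma expSum_smul_finset {ξ : ZMod N} (hξ : IsUnit ξ) (B : Finset (ZMod N)) (t : ZMod N) :
    expSum (ξ • B) t = expSum B (t * ξ) := by
  simp_rw [expSum, smul_finset_def, sum_image fun a _ b _ h => hξ.smul_left_cancel.mp h,
    smul_eq_mul, mul_assoc]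

end ZMod

section Prime

variable {p : ℕ} [Fact p.Prime]

lemma sum_normSq_expSum_mul_le (B S : Finset (ZMod p)) {t : ZMod p} (ht : t ≠ 0) :
    ∑ ξ ∈ S, Complex.normSq (expSum B (t * ξ)) ≤ p * #B := by
  rw [← sum_normSq_expSum, ← sum_image (f := fun u => Complex.normSq (expSum B u))
    fun _ _ _ _ h => mul_left_cancel₀ ht h]
  exact sum_le_univ_sum_of_nonneg fun _ => Complex.normSq_nonneg _

lemma mul_sum_addEnergy_smul_finset_le (A S : Finset (ZMod p)) (hS : ∀ ξ ∈ S, ξ ≠ 0) :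
    p * ∑ ξ ∈ S, (E[A, ξ • A] : ℝ) ≤ #S * #A ^ 4 + p ^ 2 * #A ^ 2 := by
  set n : ZMod p → ℝ := fun t => Complex.normSq (expSum A t)
  have hn : ∀ t, 0 ≤ n t := fun t => Complex.normSq_nonneg _
  calc p * ∑ ξ ∈ S, (E[A, ξ • A] : ℝ)
      = ∑ t, n t * ∑ ξ ∈ S, n (t * ξ) := by
        have h (ξ) (hξ : ξ ∈ S) : p * (E[A, ξ • A] : ℝ) = ∑ t, n t * n (t * ξ) := by
          simp_rw [addEnergy_mul_eq_sum_normSq_mul, expSum_smul_finset (hS ξ hξ).isUnit, n]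
        rw [mul_sum, sum_congr rfl h, sum_comm]
        simp_rw [mul_sum]
    _ = n 0 * ∑ _ξ ∈ S, n 0 + ∑ t ∈ univ.erase 0, n t * ∑ ξ ∈ S, n (t * ξ) := by
        rw [← add_sum_erase _ _ (mem_univ 0)]
        simp only [zero_mul]
    _ ≤ n 0 * ∑ _ξ ∈ S, n 0 + ∑ t ∈ univ.erase 0, n t * (p * #A) := by
        gcongr with t ht
        · exact hn t
        · exact sum_normSq_expSum_mul_le A S (ne_of_mem_erase ht)
    _ ≤ n 0 * ∑ _ξ ∈ S, n 0 + (∑ t, n t) * (p * #A) := by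
        rw [← sum_mul]
        gcongr
        · exact fun t _ _ => hn t
        · exact subset_univ _
    _ = #S * #A ^ 4 + p ^ 2 * #A ^ 2 := by
        rw [sum_normSq_expSum, show n 0 = #A ^ 2 from normSq_expSum_zero A, sum_const,
          nsmul_eq_mul]
        ring

lemma exists_addEnergy_smul_finset_le (A : Finset (ZMod p)) {S : Finset (ZMod p)}
    (hS : S.Nonempty) (hS0 : ∀ ξ ∈ S, ξ ≠ 0) :
    ∃ ξ ∈ S, (E[A, ξ • A] : ℝ) ≤ #A ^ 4 / p + p * #A ^ 2 / #S := by
  apply exists_le_of_sum_le hS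
  have hp : (0 : ℝ) < p := by exact_mod_cast (Fact.out : p.Prime).pos
  have hs : (0 : ℝ) < #S := by exact_mod_cast hS.card_pos
  rw [sum_const, nsmul_eq_mul, ← mul_le_mul_iff_of_pos_left hp]
  refine (mul_sum_addEnergy_smul_finset_le A S hS0).trans (le_of_eq ?_)
  field_simp

end Prime

theorem stmt10 (p : ℕ) (hp : p.Prime)
    (A : Finset (ZMod p)) (hA : A.Nonempty)
    (S : Finset (ZMod p)) (hS : S.Nonempty) (hS0 : ∀ ξ ∈ S, ξ ≠ 0) :
    ∃ ξ ∈ S, ((A + ξ • A).card : ℝ)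
      ≥ (1 / (p : ℝ) + (p : ℝ) / ((S.card : ℝ) * (A.card : ℝ) ^ 2))⁻¹ := by
  have : Fact p.Prime := ⟨hp⟩
  obtain ⟨ξ, hξS, hEξ⟩ := exists_addEnergy_smul_finset_le A hS hS0
  refine ⟨ξ, hξS, ?_⟩
  have hK : (0 : ℝ) < #A := by exact_mod_cast hA.card_pos
  have hCS : (#A : ℝ) ^ 4 ≤ #(A + ξ • A) * E[A, ξ • A] := by
    have := le_card_add_mul_addEnergy A (ξ • A)
    rw [card_smul_finset₀ (hS0 ξ hξS)] at this
    exact_mod_cast (pow_add #A 2 2).trans_le this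
  have hE : (E[A, ξ • A] : ℝ) ≤ #A ^ 4 * (1 / p + p / (#S * #A ^ 2)) := by
    convert hEξ using 1
    field_simp
  have hX : (0 : ℝ) < 1 / p + p / (#S * #A ^ 2) :=
    add_pos_of_pos_of_nonneg (one_div_pos.mpr (mod_cast hp.pos)) (by positivity)
  rw [ge_iff_le, inv_le_iff_one_le_mul₀ hX]
  nlinarith [mul_le_mul_of_nonneg_left hE (Nat.cast_nonneg #(A + ξ • A)), pow_pos hK 4]
end

section
/- For a prime $p$, a nonempty subset $A \subseteq \mathbb{F}_p$, a nonempty subset $S \subseteq \mathbb{F}_p^*$, and any $c \in (0,1]$, there are at least $(1-c)|S|$ elements $\xi \in S$ satisfying $|A + \xi A| \ge c \cdot (1/p + p/(|S||A|^2))^{-1}$. -/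
/-!
Write `E(ξ)` for the number of solutions of `a₁ + ξ a₂ = a₃ + ξ a₄` in `A`. By Cauchy–Schwarz,
`|A|⁴ ≤ |A + ξA| E(ξ)`. Two distinct pairs `(a₁, a₂) ≠ (a₃, a₄)` collide for at most one `ξ`, so
`∑_ξ E(ξ) ≤ p|A|² + |A|⁴`; combined with `E(ξ) ≥ |A|⁴/p` and `E(0) ≥ |A|³` this gives
`∑_{ξ ∈ S} E(ξ) ≤ |S||A|⁴/p + p|A|²`. A Markov-type count then shows that at most `c|S|` elements
`ξ ∈ S` have `|A + ξA| < c (1/p + p/(|S||A|²))⁻¹`.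
-/

open Finset Pointwise

namespace Finset

variable {α β : Type*} [DecidableEq β]

def collisionCount (f : α → β) (s : Finset α) : ℕ := #{x ∈ s ×ˢ s | f x.1 = f x.2}

lemma collisionCount_eq_sum_sq (f : α → β) (s : Finset α) :
    collisionCount f s = ∑ y ∈ s.image f, #{x ∈ s | f x = y} ^ 2 := by
  rw [collisionCount, card_eq_sum_card_fiberwise (f := fun x => f x.1) (t := s.image f)]
  · refine sum_congr rfl fun y _ => ?_
    rw [sq, ← card_product]
    congr 1
    ext x
    simp only [mem_filter, mem_product]
    constructor
    · rintro ⟨⟨⟨h1, h2⟩, h⟩, rfl⟩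
      exact ⟨⟨h1, rfl⟩, h2, h.symm⟩
    · rintro ⟨⟨h1, rfl⟩, h2, h⟩
      exact ⟨⟨⟨h1, h2⟩, h.symm⟩, rfl⟩
  · intro x hx
    exact mem_image_of_mem f (mem_product.1 (mem_filter.1 hx).1).1

lemma sq_card_le_card_image_mul_collisionCount (f : α → β) (s : Finset α) :
    #s ^ 2 ≤ #(s.image f) * collisionCount f s := by
  rw [card_eq_sum_card_image f s, collisionCount_eq_sum_sq]
  exact sq_sum_le_card_mul_sum_sq

lemma sum_collisionCount_le [DecidableEq α] {ι : Type*} (T : Finset ι) (f : ι → α → β)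
    (s : Finset α) (hf : ∀ u ∈ s, ∀ v ∈ s, u ≠ v → #{i ∈ T | f i u = f i v} ≤ 1) :
    ∑ i ∈ T, collisionCount (f i) s ≤ #T * #s + #s ^ 2 := by
  have hpair : ∀ x ∈ s ×ˢ s,
      #{i ∈ T | f i x.1 = f i x.2} ≤ (if x.1 = x.2 then #T else 0) + 1 := by
    rintro ⟨u, v⟩ huv
    rw [mem_product] at huv
    by_cases h : u = v
    · simp only [h, if_true]
      exact (card_filter_le _ _).trans (Nat.le_succ _)
    · simpa only [h, if_false, zero_add] using hf u huv.1 v huv.2 h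
  calc ∑ i ∈ T, collisionCount (f i) s
      = ∑ x ∈ s ×ˢ s, #{i ∈ T | f i x.1 = f i x.2} := by
        simp only [collisionCount, card_filter]
        exact sum_comm
    _ ≤ ∑ x ∈ s ×ˢ s, ((if x.1 = x.2 then #T else 0) + 1) := sum_le_sum hpair
    _ = #T * #s + #s ^ 2 := by
        rw [sum_add_distrib, sum_product, sum_const, card_product, smul_eq_mul, mul_one, sq]
        simp [sum_ite_eq, mul_comm]

end Finset

section Dilates

variable {R : Type*} [Semiring R] [DecidableEq R]

/-- For `ξ ≠ 0` this is the additive energy `E(A, ξ • A)`. -/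
def dilateEnergy (A : Finset R) (ξ : R) : ℕ :=
  collisionCount (fun x : R × R => x.1 + ξ * x.2) (A ×ˢ A)

lemma image_add_mul_product (A : Finset R) (ξ : R) :
    (A ×ˢ A).image (fun x : R × R => x.1 + ξ * x.2) = A + ξ • A := by
  ext y
  simp [mem_add, mem_smul_finset, and_assoc]

lemma card_pow_four_le_card_add_smul_mul_dilateEnergy (A : Finset R) (ξ : R) :
    #A ^ 4 ≤ #(A + ξ • A) * dilateEnergy A ξ := by
  have := sq_card_le_card_image_mul_collisionCount (fun x : R × R => x.1 + ξ * x.2) (A ×ˢ A)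
  rwa [card_product, image_add_mul_product, ← sq, ← pow_mul] at this

lemma card_pow_four_le_card_mul_dilateEnergy [Fintype R] (A : Finset R) (ξ : R) :
    #A ^ 4 ≤ Fintype.card R * dilateEnergy A ξ :=
  (card_pow_four_le_card_add_smul_mul_dilateEnergy A ξ).trans
    (Nat.mul_le_mul_right _ (card_le_univ _))

lemma card_pow_three_le_dilateEnergy_zero (A : Finset R) : #A ^ 3 ≤ dilateEnergy A 0 := by
  obtain rfl | hA := A.eq_empty_or_nonempty
  · simp
  have hcs := sq_card_le_card_image_mul_collisionCount (fun x : R × R => x.1 + 0 * x.2) (A ×ˢ A)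
  have himage : #((A ×ˢ A).image fun x : R × R => x.1 + 0 * x.2) ≤ #A :=
    card_le_card <| image_subset_iff.2 fun x hx => by simpa using (mem_product.1 hx).1
  rw [card_product, ← sq, ← pow_mul] at hcs
  refine Nat.le_of_mul_le_mul_left ?_ hA.card_pos
  calc #A * #A ^ 3 = #A ^ 4 := by ring
    _ ≤ _ := hcs.trans (Nat.mul_le_mul_right _ himage)

end Dilates

section FiniteDomain

variable {R : Type*} [CommRing R] [IsDomain R] [DecidableEq R]

lemma card_filter_add_mul_eq_le_one (T : Finset R) {u v : R × R} (huv : u ≠ v) :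
    #{ξ ∈ T | u.1 + ξ * u.2 = v.1 + ξ * v.2} ≤ 1 := by
  refine card_le_one.2 fun ξ hξ ξ' hξ' => ?_
  obtain ⟨-, h⟩ := mem_filter.1 hξ
  obtain ⟨-, h'⟩ := mem_filter.1 hξ'
  by_contra hne
  have hprod : (ξ - ξ') * (u.2 - v.2) = 0 := by linear_combination h - h'
  have hb : u.2 = v.2 := sub_eq_zero.1 <| (mul_eq_zero.1 hprod).resolve_left (sub_ne_zero.2 hne)
  exact huv (Prod.ext (by linear_combination h - ξ * hb) hb)

variable [Fintype R]

lemma sum_dilateEnergy_le (A : Finset R) :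
    ∑ ξ, dilateEnergy A ξ ≤ Fintype.card R * #A ^ 2 + #A ^ 4 := by
  have h := sum_collisionCount_le univ (fun ξ (x : R × R) => x.1 + ξ * x.2) (A ×ˢ A)
    fun _ _ _ _ huv => card_filter_add_mul_eq_le_one univ huv
  rwa [card_univ, card_product, ← sq, ← pow_mul] at h

lemma card_mul_sum_dilateEnergy_le (A S : Finset R) (hS : (0 : R) ∉ S) :
    Fintype.card R * ∑ ξ ∈ S, dilateEnergy A ξ
      ≤ Fintype.card R ^ 2 * #A ^ 2 + #S * #A ^ 4 := by
  set q := Fintype.card R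
  set rest := univ \ insert 0 S
  have hsplit : ∑ ξ, dilateEnergy A ξ
      = dilateEnergy A 0 + ∑ ξ ∈ S, dilateEnergy A ξ + ∑ ξ ∈ rest, dilateEnergy A ξ := by
    rw [← sum_sdiff (subset_univ (insert 0 S)), sum_insert hS, add_comm]
  have hrest : #rest * #A ^ 4 ≤ q * ∑ ξ ∈ rest, dilateEnergy A ξ := by
    rw [← smul_eq_mul, ← sum_const, mul_sum]
    exact sum_le_sum fun ξ _ => card_pow_four_le_card_mul_dilateEnergy A ξ
  have hcard : #rest + (#S + 1) = q := by
    rw [← card_insert_of_notMem hS, card_sdiff_add_card_eq_card (subset_univ _), card_univ]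
  have hAq : #A ^ 4 ≤ q * #A ^ 3 := by
    rw [pow_succ' _ 3]
    exact Nat.mul_le_mul_right _ (card_le_univ A)
  -- the `ξ ∉ S` are accounted for by `E(ξ) ≥ |A|⁴ / q` and, for `ξ = 0`, by `E(0) ≥ |A|³`
  have hzero := card_pow_three_le_dilateEnergy_zero A
  have htotal := sum_dilateEnergy_le A
  rw [hsplit] at htotal
  have hq4 : q * #A ^ 4 = #rest * #A ^ 4 + #S * #A ^ 4 + #A ^ 4 := by rw [← hcard]; ring
  nlinarith [Nat.mul_le_mul_left q htotal, Nat.mul_le_mul_left q hzero]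

end FiniteDomain

lemma card_mul_le_card_filter_mul_add {ι : Type*} (S : Finset ι) (g E : ι → ℝ) {K t : ℝ}
    (ht : 0 ≤ t) (hE : ∀ i ∈ S, 0 ≤ E i) (hK : ∀ i ∈ S, K ≤ g i * E i) :
    #S * K ≤ #{i ∈ S | t ≤ g i} * K + t * ∑ i ∈ S, E i := by
  have hsmall : #{i ∈ S | ¬t ≤ g i} * K ≤ t * ∑ i ∈ S, E i := by
    rw [← nsmul_eq_mul, ← sum_const, mul_sum]
    calc ∑ _i ∈ S with ¬t ≤ g _i, K
        ≤ ∑ i ∈ S with ¬t ≤ g i, t * E i := sum_le_sum fun i hi => by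
          obtain ⟨hiS, hlt⟩ := mem_filter.1 hi
          exact (hK i hiS).trans (mul_le_mul_of_nonneg_right (not_le.1 hlt).le (hE i hiS))
      _ ≤ ∑ i ∈ S, t * E i :=
          sum_le_sum_of_subset_of_nonneg (filter_subset _ _) fun i hi _ => mul_nonneg ht (hE i hi)
  rw [← card_filter_add_card_filter_not fun i => t ≤ g i, Nat.cast_add, add_mul]
  linarith

theorem stmt11_general (p : ℕ) (hp : p.Prime)
    (A : Finset (ZMod p)) (hA : A.Nonempty)
    (S : Finset (ZMod p)) (hS : S.Nonempty) (hS0 : ∀ ξ ∈ S, ξ ≠ 0)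
    (c : ℝ) (hc0 : 0 < c) :
    ((S.filter (fun ξ => ((A + ξ • A).card : ℝ)
        ≥ c * (1 / (p : ℝ) + (p : ℝ) / ((S.card : ℝ) * (A.card : ℝ) ^ 2))⁻¹)).card : ℝ)
      ≥ (1 - c) * S.card := by
  have : Fact p.Prime := ⟨hp⟩
  have hp0 : (0 : ℝ) < p := by exact_mod_cast hp.pos
  have hn : (0 : ℝ) < #A := by exact_mod_cast hA.card_pos
  have hs : (0 : ℝ) < #S := by exact_mod_cast hS.card_pos
  set X := 1 / (p : ℝ) + p / ((#S : ℝ) * #A ^ 2) with hX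
  have henergy : ∑ ξ ∈ S, (dilateEnergy A ξ : ℝ) ≤ X * (#S * #A ^ 4) := by
    have h := card_mul_sum_dilateEnergy_le A S fun h => hS0 0 h rfl
    rw [ZMod.card] at h
    calc _ ≤ ((p : ℝ) ^ 2 * #A ^ 2 + #S * #A ^ 4) / p := by
          rw [le_div_iff₀ hp0, mul_comm]
          exact_mod_cast h
      _ = X * (#S * #A ^ 4) := by rw [hX]; field_simp; ring
  have hcount := card_mul_le_card_filter_mul_add S (fun ξ => (#(A + ξ • A) : ℝ))
    (fun ξ => (dilateEnergy A ξ : ℝ)) (K := (#A : ℝ) ^ 4) (t := c * X⁻¹) (by positivity)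
    (fun _ _ => by positivity)
    fun ξ _ => by exact_mod_cast card_pow_four_le_card_add_smul_mul_dilateEnergy A ξ
  have hexcess : c * X⁻¹ * ∑ ξ ∈ S, (dilateEnergy A ξ : ℝ) ≤ c * (#S * #A ^ 4) := by
    rw [mul_assoc]
    exact mul_le_mul_of_nonneg_left ((inv_mul_le_iff₀ (by positivity)).2 henergy) hc0.le
  refine le_of_mul_le_mul_right ?_ (pow_pos hn 4)
  linarith

theorem stmt11 (p : ℕ) (hp : p.Prime)
    (A : Finset (ZMod p)) (hA : A.Nonempty)
    (S : Finset (ZMod p)) (hS : S.Nonempty) (hS0 : ∀ ξ ∈ S, ξ ≠ 0)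
    (c : ℝ) (hc0 : 0 < c) (hc1 : c ≤ 1) :
    ((S.filter (fun ξ => ((A + ξ • A).card : ℝ)
        ≥ c * (1 / (p : ℝ) + (p : ℝ) / ((S.card : ℝ) * (A.card : ℝ) ^ 2))⁻¹)).card : ℝ)
      ≥ (1 - c) * S.card :=
  stmt11_general p hp A hA S hS hS0 c hc0
end

section
/- Let $p$ be a prime, $H$ the subgroup of upper-triangular matrices in $\mathrm{SL}_2(\mathbb{Z}/p\mathbb{Z})$, and $A \subseteq H$ with $|A| > 2p^{5/3} + 1$. Then $A_8$ (the set of products of at most 8 elements of $A \cup A^{-1}$) contains every element of $H$ of trace $2$, i.e., every matrix $\begin{pmatrix} 1 & x \\ 0 & 1 \end{pmatrix}$ with $x \in \mathbb{Z}/p\mathbb{Z}$. -/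
/-!
Elements of `A` are `!![t, b; 0, t⁻¹]`. By pigeonhole many of them, forming `F`, share the diagonal
entry `a`; for `β, β' ∈ F` we get `β β'⁻¹ = !![1, a (b - b'); 0, 1]`, and conjugating by `g ∈ A`
multiplies the corner by `t²`. Hence `A₈` contains every unipotent `!![1, x; 0, 1]` with
`x ∈ Q (B - B) + Q (B - B)`, where `B` is the set of corners of `F` and `Q = {t² a}`. The size of
`A` forces `|Q| |B|² > p²`, and then a Fourier argument shows that `Q (B - B) + Q (B - B) = 𝔽_p`:
with `W ξ = ∑_{q ∈ Q} |1̂_B (q ξ)|²`, the main term `W 0 ^ 2 = (|Q| |B|²)²` beats the rest, since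
Parseval gives `W ξ ≤ p |B| - |B|²` for `ξ ≠ 0` and `∑_{ξ ≠ 0} W ξ = |Q| (p |B| - |B|²)`.
-/

open Finset Pointwise Matrix
open scoped MatrixGroups

namespace ZMod

variable {p : ℕ} [Fact p.Prime]

lemma sum_stdAddChar_mul (b : ZMod p) :
    ∑ ξ : ZMod p, stdAddChar (ξ * b) = if b = 0 then (p : ℂ) else 0 := by
  simpa [ZMod.card] using AddChar.sum_mulShift b (isPrimitive_stdAddChar p)

lemma sum_sq_mul_stdAddChar_eq_card {ι : Type*} (T : Finset ι) (f : ι → ZMod p) (x : ZMod p) :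
    ∑ ξ : ZMod p, (∑ z ∈ T, stdAddChar (ξ * f z)) ^ 2 * stdAddChar (-(ξ * x)) =
      p * #{w ∈ T ×ˢ T | f w.1 + f w.2 = x} := by
  have expand : ∀ ξ : ZMod p, (∑ z ∈ T, stdAddChar (ξ * f z)) ^ 2 * stdAddChar (-(ξ * x)) =
      ∑ w ∈ T ×ˢ T, stdAddChar (ξ * (f w.1 + f w.2 - x)) := by
    intro ξ
    simp_rw [sq, sum_mul_sum, sum_product, sum_mul, ← AddChar.map_add_eq_mul]
    exact sum_congr rfl fun _ _ => sum_congr rfl fun _ _ => congrArg _ (by ring)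
  simp_rw [expand]
  rw [sum_comm]
  simp_rw [sum_stdAddChar_mul, sub_eq_zero]
  rw [sum_ite, sum_const_zero, add_zero, sum_const, nsmul_eq_mul, mul_comm]

lemma exists_add_eq_of_forall_ne_zero_le {ι : Type*} (T : Finset ι) (f : ι → ZMod p)
    (W : ZMod p → ℝ) (hW : ∀ ξ, (W ξ : ℂ) = ∑ z ∈ T, stdAddChar (ξ * f z))
    (hW_nonneg : ∀ ξ, 0 ≤ W ξ) {M : ℝ} (hM : ∀ ξ ≠ 0, W ξ ≤ M)
    (hlt : M * ∑ ξ ∈ univ.erase 0, W ξ < W 0 ^ 2) (x : ZMod p) :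
    ∃ z₁ ∈ T, ∃ z₂ ∈ T, f z₁ + f z₂ = x := by
  have hcount := congrArg Complex.re (sum_sq_mul_stdAddChar_eq_card T f x)
  simp_rw [← hW, Complex.re_sum, ← Complex.ofReal_pow, Complex.re_ofReal_mul] at hcount
  rw [← add_sum_erase _ _ (mem_univ 0), zero_mul, neg_zero, AddChar.map_zero_eq_one,
    Complex.one_re, mul_one, ← Nat.cast_mul, Complex.natCast_re] at hcount
  have hterm : ∀ ξ, -(W ξ ^ 2) ≤ W ξ ^ 2 * (stdAddChar (-(ξ * x)) : ℂ).re := by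
    intro ξ
    have hre : -1 ≤ (stdAddChar (-(ξ * x)) : ℂ).re :=
      neg_le_of_abs_le ((Complex.abs_re_le_norm _).trans_eq (AddChar.norm_apply _ _))
    nlinarith [sq_nonneg (W ξ)]
  have herr : ∑ ξ ∈ univ.erase 0, W ξ ^ 2 ≤ M * ∑ ξ ∈ univ.erase 0, W ξ := by
    rw [mul_sum]
    exact sum_le_sum fun ξ hξ => by
      rw [sq]; exact mul_le_mul_of_nonneg_right (hM ξ (ne_of_mem_erase hξ)) (hW_nonneg ξ)
  have hpos : 0 < p * #{w ∈ T ×ˢ T | f w.1 + f w.2 = x} := by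
    have := sum_le_sum fun ξ (_ : ξ ∈ univ.erase 0) => hterm ξ
    rw [sum_neg_distrib] at this
    exact Nat.cast_pos.1 (show (0 : ℝ) < _ by linarith)
  obtain ⟨⟨z₁, z₂⟩, hz⟩ := card_pos.1 (Nat.pos_of_mul_pos_left hpos)
  obtain ⟨hz, hx⟩ := mem_filter.1 hz
  exact ⟨z₁, (mem_product.1 hz).1, z₂, (mem_product.1 hz).2, hx⟩

noncomputable def expSum (B : Finset (ZMod p)) (η : ZMod p) : ℂ :=
  ∑ b ∈ B, stdAddChar (η * b)

lemma expSum_zero (B : Finset (ZMod p)) : expSum B 0 = #B := by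
  simp [expSum]

lemma norm_expSum_sq (B : Finset (ZMod p)) (η : ZMod p) :
    ((‖expSum B η‖ ^ 2 : ℝ) : ℂ) = ∑ b ∈ B, ∑ b' ∈ B, stdAddChar (η * (b - b')) := by
  push_cast
  rw [← Complex.mul_conj', expSum, map_sum, sum_mul_sum]
  simp_rw [← AddChar.map_neg_eq_conj, ← AddChar.map_add_eq_mul, mul_sub, sub_eq_add_neg]

lemma sum_norm_expSum_sq (B : Finset (ZMod p)) : ∑ η, ‖expSum B η‖ ^ 2 = p * #B := by
  have h := congrArg Complex.re (Complex.ofReal_sum univ fun η => ‖expSum B η‖ ^ 2)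
  simp_rw [Complex.ofReal_re, norm_expSum_sq] at h
  rw [h, sum_comm]
  simp_rw [sum_comm (s := univ) (t := B), sum_stdAddChar_mul, sub_eq_zero, sum_ite_eq]
  simp [mul_comm]

lemma sum_norm_expSum_mul_sq (B : Finset (ZMod p)) {c : ZMod p} (hc : c ≠ 0) :
    ∑ ξ, ‖expSum B (ξ * c)‖ ^ 2 = p * #B :=
  (Fintype.sum_equiv (Equiv.mulRight₀ c hc) _ _ fun _ => rfl).trans (sum_norm_expSum_sq B)

lemma sum_erase_zero_norm_expSum_sq (B : Finset (ZMod p)) :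
    ∑ η ∈ univ.erase 0, ‖expSum B η‖ ^ 2 = p * #B - #B ^ 2 := by
  rw [← sum_norm_expSum_sq B, ← add_sum_erase _ _ (mem_univ 0), expSum_zero, Complex.norm_natCast]
  ring

lemma sum_norm_expSum_mul_sq_le (B : Finset (ZMod p)) {Q : Finset (ZMod p)} (hQ : 0 ∉ Q)
    {ξ : ZMod p} (hξ : ξ ≠ 0) :
    ∑ q ∈ Q, ‖expSum B (ξ * q)‖ ^ 2 ≤ p * #B - #B ^ 2 := by
  rw [← sum_erase_zero_norm_expSum_sq B,
    ← sum_image (f := fun η => ‖expSum B η‖ ^ 2) (g := (ξ * ·)) fun _ _ _ _ => mul_left_cancel₀ hξ]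
  refine sum_le_sum_of_subset_of_nonneg (fun η hη => ?_) fun _ _ _ => by positivity
  obtain ⟨q, hq, rfl⟩ := mem_image.1 hη
  exact mem_erase.2 ⟨mul_ne_zero hξ (ne_of_mem_of_not_mem hq hQ), mem_univ _⟩

theorem exists_mul_sub_add_mul_sub_eq {Q B : Finset (ZMod p)} (hQ : 0 ∉ Q)
    (hQB : (p : ℝ) ^ 2 < #Q * (#B : ℝ) ^ 2) (x : ZMod p) :
    ∃ q₁ ∈ Q, ∃ q₂ ∈ Q, ∃ b₁ ∈ B, ∃ b₂ ∈ B, ∃ b₃ ∈ B, ∃ b₄ ∈ B,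
      q₁ * (b₁ - b₂) + q₂ * (b₃ - b₄) = x := by
  set W : ZMod p → ℝ := fun ξ => ∑ q ∈ Q, ‖expSum B (ξ * q)‖ ^ 2
  have hW0 : W 0 = #Q * #B ^ 2 := by simp [W, expSum_zero]
  have hW_sum : ∑ ξ ∈ univ.erase 0, W ξ = #Q * (p * #B - #B ^ 2) := by
    have hW_total : ∑ ξ, W ξ = #Q * (p * #B) := by
      rw [sum_comm, sum_congr rfl fun q hq => sum_norm_expSum_mul_sq B (ne_of_mem_of_not_mem hq hQ),
        sum_const, nsmul_eq_mul]
    rw [← add_sum_erase _ _ (mem_univ 0), hW0] at hW_total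
    linear_combination hW_total
  have hlt : (p * #B - #B ^ 2) * ∑ ξ ∈ univ.erase 0, W ξ < W 0 ^ 2 := by
    have hm : (#B : ℝ) ≤ p := by exact_mod_cast (card_le_univ B).trans_eq (ZMod.card p)
    rw [hW_sum, hW0]
    set k : ℝ := (#Q : ℝ)
    set m : ℝ := (#B : ℝ)
    have hkm : 0 < k * m ^ 2 := (by positivity : (0 : ℝ) ≤ p ^ 2).trans_lt hQB
    calc (p * m - m ^ 2) * (k * (p * m - m ^ 2)) = (k * m ^ 2) * (p - m) ^ 2 := by ring
      _ ≤ (k * m ^ 2) * p ^ 2 := by gcongr; nlinarith [(by positivity : 0 ≤ m)]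
      _ < (k * m ^ 2) * (k * m ^ 2) := by gcongr
      _ = (k * m ^ 2) ^ 2 := (sq _).symm
  obtain ⟨⟨q₁, b₁, b₂⟩, h₁, ⟨q₂, b₃, b₄⟩, h₂, hx⟩ :=
    exists_add_eq_of_forall_ne_zero_le (Q ×ˢ B ×ˢ B) (fun z => z.1 * (z.2.1 - z.2.2)) W
      (fun ξ => by simp_rw [W, Complex.ofReal_sum, norm_expSum_sq, sum_product, mul_assoc])
      (fun ξ => by positivity) (fun ξ hξ => sum_norm_expSum_mul_sq_le B hQ hξ) hlt x
  simp only [mem_product] at h₁ h₂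
  exact ⟨q₁, h₁.1, q₂, h₂.1, b₁, h₁.2.1, b₂, h₁.2.2, b₃, h₂.2.1, b₄, h₂.2.2, hx⟩

end ZMod

lemma card_le_two_mul_card_image_sq_mul {K : Type*} [CommRing K] [IsDomain K] [DecidableEq K]
    (T : Finset K) {a : K} (ha : a ≠ 0) : #T ≤ 2 * #(T.image fun t => t ^ 2 * a) := by
  refine card_le_mul_card_image T 2 fun v _ => ?_
  rcases eq_empty_or_nonempty {u ∈ T | u ^ 2 * a = v} with h | ⟨t, ht⟩
  · simp [h]
  · refine (card_le_card fun u hu => ?_).trans (card_le_two (a := t) (b := -t))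
    have hsq : u ^ 2 = t ^ 2 :=
      mul_right_cancel₀ ha ((mem_filter.1 hu).2.trans (mem_filter.1 ht).2.symm)
    simpa [sq_eq_sq_iff_eq_or_eq_neg] using hsq

lemma sq_lt_mul_sq_of_card_bounds {p a f t q : ℝ} (hp : 1 ≤ p)
    (ha : 2 * p ^ ((5 : ℝ) / 3) + 1 < a) (haf : a ≤ f * t) (htq : t ≤ 2 * q) (htp : t ≤ p)
    (hf : 0 ≤ f) : p ^ 2 < q * f ^ 2 := by
  set R := p ^ ((5 : ℝ) / 3)
  have hR : p ^ 3 ≤ R * R := by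
    rw [← Real.rpow_add (by linarith), ← Real.rpow_natCast]
    exact Real.rpow_le_rpow_of_exponent_le hp (by norm_num)
  have hR0 : 0 ≤ R := by positivity
  have hqf : R < q * f := by nlinarith
  have hpf : R < p * f := by nlinarith
  have : p * p ^ 2 < p * (q * f ^ 2) := by nlinarith [mul_lt_mul'' hqf hpf hR0 hR0]
  exact lt_of_mul_lt_mul_left this (by linarith)

lemma mul_mul_inv_mul_inv_mem_pow_four {G : Type*} [Group G] [DecidableEq G] {s : Finset G}
    {g b b' : G} (hg : g ∈ s) (hb : b ∈ s) (hb' : b' ∈ s) :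
    g * (b * b'⁻¹) * g⁻¹ ∈ (s ∪ s⁻¹ ∪ {1}) ^ 4 := by
  have hmem : ∀ y ∈ s, y ∈ s ∪ s⁻¹ ∪ {1} := fun y hy => mem_union_left _ (mem_union_left _ hy)
  have hmem_inv : ∀ y ∈ s, y⁻¹ ∈ s ∪ s⁻¹ ∪ {1} :=
    fun y hy => mem_union_left _ (mem_union_right _ (inv_mem_inv hy))
  rw [← mul_assoc, pow_succ, pow_succ, pow_succ, pow_one]
  exact mul_mem_mul (mul_mem_mul (mul_mem_mul (hmem g hg) (hmem b hb)) (hmem_inv b' hb'))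
    (hmem_inv g hg)

namespace Matrix.SpecialLinearGroup

variable {R : Type*} [CommRing R]

def unipotent (x : R) : SL(2, R) :=
  ⟨!![1, x; 0, 1], by simp [det_fin_two_of]⟩

@[simp] lemma coe_unipotent (x : R) :
    (unipotent x : Matrix (Fin 2) (Fin 2) R) = !![1, x; 0, 1] :=
  rfl

lemma unipotent_zero : unipotent (0 : R) = 1 := by
  ext i j
  fin_cases i <;> fin_cases j <;> simp

lemma unipotent_add (x y : R) : unipotent (x + y) = unipotent x * unipotent y := by
  ext i j
  fin_cases i <;> fin_cases j <;> simp [mul_apply, Fin.sum_univ_two, add_comm]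

lemma apply_zero_zero_mul_apply_one_one {g : SL(2, R)} (hg : g 1 0 = 0) : g 0 0 * g 1 1 = 1 := by
  simpa [hg] using (det_fin_two (g : Matrix (Fin 2) (Fin 2) R)).symm.trans (det_coe g)

lemma conj_unipotent {g : SL(2, R)} (hg : g 1 0 = 0) (x : R) :
    g * unipotent x * g⁻¹ = unipotent (g 0 0 ^ 2 * x) := by
  have hdet := apply_zero_zero_mul_apply_one_one hg
  apply Subtype.ext
  rw [coe_mul, coe_mul, coe_inv, adjugate_fin_two, coe_unipotent, coe_unipotent]
  ext i j
  fin_cases i <;> fin_cases j <;> simp [mul_apply, Fin.sum_univ_two, hg] <;> grind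

lemma mul_inv_eq_unipotent {b b' : SL(2, R)} (hb : b 1 0 = 0) (hb' : b' 1 0 = 0)
    (h : b 0 0 = b' 0 0) : b * b'⁻¹ = unipotent (b 0 0 * (b 0 1 - b' 0 1)) := by
  have hdet := apply_zero_zero_mul_apply_one_one hb
  have hdet' := apply_zero_zero_mul_apply_one_one hb'
  apply Subtype.ext
  rw [coe_mul, coe_inv, adjugate_fin_two, coe_unipotent]
  ext i j
  fin_cases i <;> fin_cases j <;> simp [mul_apply, Fin.sum_univ_two, hb, hb'] <;> grind

lemma eq_of_apply_zero_eq {b b' : SL(2, R)} (hb : b 1 0 = 0) (hb' : b' 1 0 = 0)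
    (h₀₀ : b 0 0 = b' 0 0) (h₀₁ : b 0 1 = b' 0 1) : b = b' := by
  rw [← mul_inv_eq_one, mul_inv_eq_unipotent hb hb' h₀₀, h₀₁, sub_self, mul_zero, unipotent_zero]

lemma unipotent_mem_pow_four [DecidableEq SL(2, R)] {A : Finset SL(2, R)}
    (hA : ∀ g ∈ A, g 1 0 = 0) {g b b' : SL(2, R)} (hg : g ∈ A) (hb : b ∈ A) (hb' : b' ∈ A)
    (h : b 0 0 = b' 0 0) :
    unipotent (g 0 0 ^ 2 * (b 0 0 * (b 0 1 - b' 0 1))) ∈ (A ∪ A⁻¹ ∪ {1}) ^ 4 := by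
  rw [← conj_unipotent (hA g hg), ← mul_inv_eq_unipotent (hA b hb) (hA b' hb') h]
  exact mul_mul_inv_mul_inv_mem_pow_four hg hb hb'

end Matrix.SpecialLinearGroup

open Matrix.SpecialLinearGroup in
theorem stmt12 (p : ℕ) (hp : p.Prime)
    [DecidableEq (Matrix.SpecialLinearGroup (Fin 2) (ZMod p))]
    (A : Finset (Matrix.SpecialLinearGroup (Fin 2) (ZMod p)))
    (hupper : ∀ g ∈ A, (g : Matrix (Fin 2) (Fin 2) (ZMod p)) 1 0 = 0)
    (hcard : (A.card : ℝ) > 2 * (p : ℝ) ^ ((5 : ℝ) / 3) + 1) :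
    ∀ x : ZMod p, ∃ h ∈ (A ∪ A⁻¹ ∪ {1}) ^ 8,
      (h : Matrix (Fin 2) (Fin 2) (ZMod p)) = !![1, x; 0, 1] := by
  intro x
  have : Fact p.Prime := ⟨hp⟩
  have hA : A.Nonempty := card_pos.1 <| Nat.cast_pos.1 <| (by positivity : (0 : ℝ) < _).trans hcard
  set T := A.image fun g => g 0 0
  obtain ⟨a, haT, hmax⟩ := exists_max_image T (fun t => #{g ∈ A | g 0 0 = t}) (hA.image _)
  set F := {g ∈ A | g 0 0 = a}
  set B := F.image fun g => g 0 1
  set Q := T.image fun t => t ^ 2 * a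
  have hT : (0 : ZMod p) ∉ T := by
    simpa [T] using fun g hg =>
      left_ne_zero_of_mul_eq_one (apply_zero_zero_mul_apply_one_one (hupper g hg))
  have ha : a ≠ 0 := ne_of_mem_of_not_mem haT hT
  have hQ : (0 : ZMod p) ∉ Q := by simpa [Q, ha] using hT
  have hBF : #B = #F := card_image_of_injOn fun g hg g' hg' h =>
    eq_of_apply_zero_eq (hupper g (mem_filter.1 hg).1) (hupper g' (mem_filter.1 hg').1)
      ((mem_filter.1 hg).2.trans (mem_filter.1 hg').2.symm) h
  have hQB : (p : ℝ) ^ 2 < #Q * (#B : ℝ) ^ 2 := by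
    refine sq_lt_mul_sq_of_card_bounds (t := #T) (by exact_mod_cast hp.one_le) hcard
      (by rw [hBF]; exact_mod_cast card_le_mul_card_image A _ hmax) ?_ ?_ (by positivity)
    · exact_mod_cast card_le_two_mul_card_image_sq_mul T ha
    · exact_mod_cast (card_le_univ T).trans_eq (ZMod.card p)
  have hV : ∀ q ∈ Q, ∀ b ∈ B, ∀ b' ∈ B, unipotent (q * (b - b')) ∈ (A ∪ A⁻¹ ∪ {1}) ^ 4 := by
    simp only [Q, T, B, F, forall_mem_image, mem_filter, and_imp]
    intro g hg β hβ hβa β' hβ' hβ'a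
    simpa [hβa, mul_assoc] using unipotent_mem_pow_four hupper hg hβ hβ' (hβa.trans hβ'a.symm)
  obtain ⟨q₁, hq₁, q₂, hq₂, b₁, hb₁, b₂, hb₂, b₃, hb₃, b₄, hb₄, rfl⟩ :=
    ZMod.exists_mul_sub_add_mul_sub_eq hQ hQB x
  refine ⟨_, ?_, coe_unipotent _⟩
  rw [unipotent_add, show 8 = 4 + 4 from rfl, pow_add]
  exact mul_mem_mul (hV q₁ hq₁ b₁ hb₁ b₂ hb₂) (hV q₂ hq₂ b₃ hb₃ b₄ hb₄)
end

section
/- Every element of $\mathrm{SL}_2(\mathbb{Z}/p\mathbb{Z})$ ($p$ prime) can be written as a product $\begin{pmatrix} 1 & 0 \\ y & 1 \end{pmatrix}\begin{pmatrix} 1 & x \\ 0 & 1 \end{pmatrix}\begin{pmatrix} 1 & 0 \\ y' & 1 \end{pmatrix}\begin{pmatrix} 1 & x' \\ 0 & 1 \end{pmatrix}$ for some $x, y, x', y' \in \mathbb{Z}/p\mathbb{Z}$. -/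
open Matrix

section

variable {K : Type*} [Field K]

theorem eq_upper_mul_lower_mul_upper_of_det_eq_one {a b c d : K} (hdet : a * d - b * c = 1)
    (hc : c ≠ 0) :
    !![a, b; c, d] = !![1, (a - 1) / c; 0, 1] * !![1, 0; c, 1] * !![1, (d - 1) / c; 0, 1] := by
  simp only [mul_fin_two, EmbeddingLike.apply_eq_iff_eq, vecCons_inj, and_true]
  refine ⟨⟨?_, ?_⟩, ?_, ?_⟩ <;> field_simp
  · ring
  · linear_combination -hdet
  · ring
  · ring

/-- Left multiplication by `!![1, 0; -y, 1]` turns the lower-left entry into `c - y * a`. -/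
theorem eq_lower_mul_upper_mul_lower_mul_upper_of_det_eq_one {a b c d : K}
    (hdet : a * d - b * c = 1) {y : K} (hy : c - y * a ≠ 0) :
    !![a, b; c, d] = !![1, 0; y, 1] * !![1, (a - 1) / (c - y * a); 0, 1]
      * !![1, 0; c - y * a, 1] * !![1, (d - y * b - 1) / (c - y * a); 0, 1] := by
  have hdet' : a * (d - y * b) - b * (c - y * a) = 1 := by linear_combination hdet
  rw [mul_assoc, mul_assoc, ← mul_assoc !![1, (a - 1) / (c - y * a); 0, 1],
    ← eq_upper_mul_lower_mul_upper_of_det_eq_one hdet' hy, mul_fin_two]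
  congr <;> ring

theorem Matrix.SpecialLinearGroup.exists_eq_lower_mul_upper_mul_lower_mul_upper
    (g : SpecialLinearGroup (Fin 2) K) :
    ∃ x y x' y' : K,
      (g : Matrix (Fin 2) (Fin 2) K)
        = !![1, 0; y, 1] * !![1, x; 0, 1] * !![1, 0; y', 1] * !![1, x'; 0, 1] := by
  have hdet : g 0 0 * g 1 1 - g 0 1 * g 1 0 = 1 := by rw [← det_fin_two]; exact g.det_coe
  obtain ⟨y, hy⟩ : ∃ y, g 1 0 - y * g 0 0 ≠ 0 := by
    by_cases hc : g 1 0 = 0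
    · refine ⟨-1, fun h ↦ ?_⟩
      simp_all
    · exact ⟨0, by simpa using hc⟩
  exact ⟨_, y, _, _,
    (eta_fin_two _).trans (eq_lower_mul_upper_mul_lower_mul_upper_of_det_eq_one hdet hy)⟩

end

theorem stmt13 (p : ℕ) (hp : p.Prime)
    (g : Matrix.SpecialLinearGroup (Fin 2) (ZMod p)) :
    ∃ x y x' y' : ZMod p,
      (g : Matrix (Fin 2) (Fin 2) (ZMod p))
        = !![1, 0; y, 1] * !![1, x; 0, 1] * !![1, 0; y', 1] * !![1, x'; 0, 1] := by
  have : Fact p.Prime := ⟨hp⟩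
  exact g.exists_eq_lower_mul_upper_mul_lower_mul_upper
end

section
/- Let $K$ be a field, let $r \in K^*$, and let $g = \begin{pmatrix} a & b \\ c & d \end{pmatrix} \in \mathrm{SL}_2(K)$ with $abcd \ne 0$. Then the product of the upper-right and lower-left entries of $g \begin{pmatrix} r & 0 \\ 0 & r^{-1} \end{pmatrix} g^{-1}$ equals $-(r - r^{-1})^2 abcd$; moreover, the map $r \mapsto -(r - r^{-1})^2 abcd$ on $K^*$ is at most 4-to-1, so for a set $V$ of diagonal matrices in $\mathrm{SL}_2(K)$ the set $\{h_{12} h_{21} : h \in gVg^{-1}\}$ has cardinality at least $|V|/4$. -/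
open Finset Matrix Polynomial

/-!
The product formula is a direct computation with `g⁻¹ = adjugate g`. Clearing denominators,
the `r ≠ 0` with `-(r - r⁻¹)² abcd = t` are roots of the nonzero quartic
`abcd X⁴ + (t - 2abcd) X² + abcd`, so there are at most four of them. A diagonal matrix of
`SL₂(K)` is determined by its `(0, 0)` entry, hence `h ↦ h₁₂ h₂₁` is at most 4-to-1 on `gVg⁻¹`.
-/

theorem Polynomial.finite_and_ncard_le_natDegree_of_forall_isRoot {R : Type*} [CommRing R]
    [IsDomain R] {p : R[X]} (hp : p ≠ 0) {S : Set R} (hS : ∀ x ∈ S, p.IsRoot x) :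
    S.Finite ∧ S.ncard ≤ p.natDegree := by
  classical
  have hsub : S ⊆ ↑p.roots.toFinset := fun x hx => by
    simpa [mem_roots hp] using hS x hx
  refine ⟨p.roots.toFinset.finite_toSet.subset hsub, ?_⟩
  calc S.ncard ≤ (↑p.roots.toFinset : Set R).ncard :=
        Set.ncard_le_ncard hsub p.roots.toFinset.finite_toSet
    _ = p.roots.toFinset.card := Set.ncard_coe_finset _
    _ ≤ Multiset.card p.roots := Multiset.toFinset_card_le _
    _ ≤ p.natDegree := card_roots' p

section Field

variable {K : Type*} [Field K]

theorem finite_and_ncard_le_four_of_neg_sub_inv_sq_mul_eq {k : K} (hk : k ≠ 0) (t : K) :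
    {r : K | r ≠ 0 ∧ -(r - r⁻¹) ^ 2 * k = t}.Finite ∧
      {r : K | r ≠ 0 ∧ -(r - r⁻¹) ^ 2 * k = t}.ncard ≤ 4 := by
  set p : K[X] := C k * X ^ 4 + C (t - 2 * k) * X ^ 2 + C k
  have hcoeff : p.coeff 4 = k := by
    simp only [p, coeff_add, coeff_C_mul, coeff_X_pow, coeff_C]
    norm_num
  have hp : p ≠ 0 := fun h => hk (by rw [← hcoeff, h, coeff_zero])
  have hdeg : p.natDegree ≤ 4 := by simp only [p]; compute_degree
  have hroot : ∀ r ∈ {r : K | r ≠ 0 ∧ -(r - r⁻¹) ^ 2 * k = t}, p.IsRoot r := by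
    rintro r ⟨hr, rfl⟩
    simp only [p, IsRoot, eval_add, eval_mul, eval_C, eval_pow, eval_X]
    field_simp
    ring
  obtain ⟨hfin, hcard⟩ := finite_and_ncard_le_natDegree_of_forall_isRoot hp hroot
  exact ⟨hfin, hcard.trans hdeg⟩

theorem Finset.card_le_four_mul_card_image_neg_sub_inv_sq_mul [DecidableEq K] {k : K}
    (hk : k ≠ 0) {S : Finset K} (hS : ∀ r ∈ S, r ≠ 0) :
    S.card ≤ 4 * (S.image fun r => -(r - r⁻¹) ^ 2 * k).card := by
  refine card_le_mul_card_image S 4 fun t _ => ?_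
  obtain ⟨hfin, hcard⟩ := finite_and_ncard_le_four_of_neg_sub_inv_sq_mul_eq hk t
  have hsub : (↑(S.filter fun r => -(r - r⁻¹) ^ 2 * k = t) : Set K) ⊆
      {r : K | r ≠ 0 ∧ -(r - r⁻¹) ^ 2 * k = t} := fun r hr => by
    rw [coe_filter] at hr
    exact ⟨hS r hr.1, hr.2⟩
  rw [← Set.ncard_coe_finset]
  exact (Set.ncard_le_ncard hsub hfin).trans hcard

namespace Matrix.SpecialLinearGroup

theorem conj_diagonal_apply_zero_one_mul_apply_one_zero (g D : SpecialLinearGroup (Fin 2) K)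
    {r : K} (hD : (D : Matrix (Fin 2) (Fin 2) K) = !![r, 0; 0, r⁻¹]) :
    ((g * D * g⁻¹ : SpecialLinearGroup (Fin 2) K) : Matrix (Fin 2) (Fin 2) K) 0 1 *
        ((g * D * g⁻¹ : SpecialLinearGroup (Fin 2) K) : Matrix (Fin 2) (Fin 2) K) 1 0 =
      -(r - r⁻¹) ^ 2 * ((g : Matrix (Fin 2) (Fin 2) K) 0 0 * (g : Matrix (Fin 2) (Fin 2) K) 0 1 *
        (g : Matrix (Fin 2) (Fin 2) K) 1 0 * (g : Matrix (Fin 2) (Fin 2) K) 1 1) := by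
  simp only [coe_mul, coe_inv, adjugate_fin_two, hD]
  simp [mul_apply, Fin.sum_univ_succ]
  ring

theorem coe_eq_of_antidiagonal_eq_zero (v : SpecialLinearGroup (Fin 2) K)
    (h01 : (v : Matrix (Fin 2) (Fin 2) K) 0 1 = 0)
    (h10 : (v : Matrix (Fin 2) (Fin 2) K) 1 0 = 0) :
    (v : Matrix (Fin 2) (Fin 2) K) 0 0 ≠ 0 ∧
      (v : Matrix (Fin 2) (Fin 2) K) =
        !![(v : Matrix (Fin 2) (Fin 2) K) 0 0, 0; 0, ((v : Matrix (Fin 2) (Fin 2) K) 0 0)⁻¹] := by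
  have hdet : (v : Matrix (Fin 2) (Fin 2) K) 0 0 * (v : Matrix (Fin 2) (Fin 2) K) 1 1 = 1 := by
    have hv := v.2
    rw [det_fin_two, h01, h10] at hv
    simpa using hv
  have h00 : (v : Matrix (Fin 2) (Fin 2) K) 0 0 ≠ 0 := left_ne_zero_of_mul_eq_one hdet
  refine ⟨h00, ?_⟩
  ext i j
  fin_cases i <;> fin_cases j <;> simp [h01, h10, eq_inv_of_mul_eq_one_right hdet]

end Matrix.SpecialLinearGroup

end Field

theorem stmt16 {K : Type*} [Field K] [DecidableEq K]
    [DecidableEq (Matrix.SpecialLinearGroup (Fin 2) K)]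
    (g : Matrix.SpecialLinearGroup (Fin 2) K)
    (a b c d : K)
    (ha : (g : Matrix (Fin 2) (Fin 2) K) 0 0 = a)
    (hb : (g : Matrix (Fin 2) (Fin 2) K) 0 1 = b)
    (hc : (g : Matrix (Fin 2) (Fin 2) K) 1 0 = c)
    (hd : (g : Matrix (Fin 2) (Fin 2) K) 1 1 = d)
    (habcd : a * b * c * d ≠ 0) :
    (∀ r : K, r ≠ 0 → ∀ D : Matrix.SpecialLinearGroup (Fin 2) K,
        (D : Matrix (Fin 2) (Fin 2) K) = !![r, 0; 0, r⁻¹] →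
        ((g * D * g⁻¹ : Matrix.SpecialLinearGroup (Fin 2) K) : Matrix (Fin 2) (Fin 2) K) 0 1 *
          ((g * D * g⁻¹ : Matrix.SpecialLinearGroup (Fin 2) K) : Matrix (Fin 2) (Fin 2) K) 1 0
          = -(r - r⁻¹) ^ 2 * (a * b * c * d)) ∧
    (∀ t : K, ({r : K | r ≠ 0 ∧ -(r - r⁻¹) ^ 2 * (a * b * c * d) = t}).Finite ∧
        ({r : K | r ≠ 0 ∧ -(r - r⁻¹) ^ 2 * (a * b * c * d) = t}).ncard ≤ 4) ∧
    (∀ V : Finset (Matrix.SpecialLinearGroup (Fin 2) K),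
      (∀ v ∈ V, (v : Matrix (Fin 2) (Fin 2) K) 0 1 = 0 ∧ (v : Matrix (Fin 2) (Fin 2) K) 1 0 = 0) →
      (((V.image (fun v => g * v * g⁻¹)).image
          (fun h : Matrix.SpecialLinearGroup (Fin 2) K =>
            (h : Matrix (Fin 2) (Fin 2) K) 0 1 * (h : Matrix (Fin 2) (Fin 2) K) 1 0)).card : ℝ)
        ≥ (V.card : ℝ) / 4) := by
  have hconj : ∀ r : K, ∀ D : SpecialLinearGroup (Fin 2) K,
      (D : Matrix (Fin 2) (Fin 2) K) = !![r, 0; 0, r⁻¹] → _ := fun r D hD => by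
    have := SpecialLinearGroup.conj_diagonal_apply_zero_one_mul_apply_one_zero g D hD
    rwa [ha, hb, hc, hd] at this
  refine ⟨fun r _ => hconj r, finite_and_ncard_le_four_of_neg_sub_inv_sq_mul_eq habcd,
    fun V hV => ?_⟩
  have hdiag := fun v hv =>
    SpecialLinearGroup.coe_eq_of_antidiagonal_eq_zero v (hV v hv).1 (hV v hv).2
  set e : SpecialLinearGroup (Fin 2) K → K := fun v => (v : Matrix (Fin 2) (Fin 2) K) 0 0
  have he : Set.InjOn e V := fun v hv w hw hvw => Subtype.ext <| by
    rw [(hdiag v hv).2, (hdiag w hw).2]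
    exact congrArg (fun x => !![x, 0; 0, x⁻¹]) hvw
  have himage : ((V.image (fun v => g * v * g⁻¹)).image fun h : SpecialLinearGroup (Fin 2) K =>
        (h : Matrix (Fin 2) (Fin 2) K) 0 1 * (h : Matrix (Fin 2) (Fin 2) K) 1 0) =
      (V.image e).image fun r => -(r - r⁻¹) ^ 2 * (a * b * c * d) := by
    simp only [image_image]
    exact image_congr fun v hv => hconj _ v (hdiag v hv).2
  have hcard := card_le_four_mul_card_image_neg_sub_inv_sq_mul habcd (S := V.image e)
    (by simpa using fun v hv => (hdiag v hv).1)
  rw [card_image_of_injOn he, ← himage] at hcard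
  rw [ge_iff_le, div_le_iff₀ (by norm_num : (0 : ℝ) < 4)]
  exact_mod_cast hcard.trans_eq (mul_comm _ _)
end
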